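/- arXiv:1801.03152 — 4 statements merged into one kernel-verified Lean document; each statement's English description precedes it below -/
import Mathlib

section
/- The Gagliardo–Nirenberg inequality on the torus: ||f||³_{L⁶(T)} ≤ ||f||_{Ḣ¹(T)} ||f||²_{L²(T)} + (1/(2π)) ||f||³_{L²(T)} holds for all f in H¹(T). -/
/-!
Write `h = ‖f‖²`. Since `h` takes the same value at both ends of a period, for any two points the
variation of `h` along either of the two arcs joining them bounds `|h x - h θ|`, and the two arcs
together cover the period once; hence `h x - h θ ≤ ½ ∫ |h'| ≤ ∫ ‖f‖ ‖f'‖`. Averaging over `θ` and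
applying Cauchy–Schwarz gives `‖f‖²_∞ ≤ ‖f‖²₂ / 2π + ‖f‖₂ ‖f'‖₂`, and the theorem follows from
`‖f‖⁶₆ ≤ ‖f‖⁴_∞ ‖f‖²₂`.
-/

open MeasureTheory intervalIntegral

noncomputable section

/-- The density `|f|² - ‖f‖²_{L²}/(2π)` on the torus, realized on `[0,2π]`. -/
def gaugeDens (f : ℝ → ℂ) (y : ℝ) : ℝ :=
  ‖f y‖ ^ 2 - (∫ t in (0:ℝ)..(2 * Real.pi), ‖f t‖ ^ 2) / (2 * Real.pi)

/-- The zero-average periodic primitive `I[f]`. -/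
def gaugePrim (f : ℝ → ℂ) (x : ℝ) : ℝ :=
  (1 / (2 * Real.pi)) *
    ∫ θ in (0:ℝ)..(2 * Real.pi), ∫ y in θ..x, gaugeDens f y

/-- The gauge map `𝒢_α f = e^{iα I[f]} f`. -/
def gaugeMap (α : ℝ) (f : ℝ → ℂ) : ℝ → ℂ :=
  fun x => Complex.exp (Complex.I * (α : ℂ) * (gaugePrim f x : ℂ)) * f x

/-- `n`-th Fourier coefficient on the torus of length `2π`. -/
def fCoeff (f : ℝ → ℂ) (n : ℤ) : ℂ :=
  (1 / (2 * Real.pi)) * ∫ x in (0:ℝ)..(2 * Real.pi), f x * Complex.exp (-Complex.I * (n : ℂ) * (x : ℂ))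

/-- Fourier projection onto modes `|n| ≤ N`. -/
def fProj (N : ℕ) (f : ℝ → ℂ) : ℝ → ℂ :=
  fun x => ∑ n ∈ Finset.Icc (-(N:ℤ)) (N:ℤ), fCoeff f n * Complex.exp (Complex.I * (n : ℂ) * (x : ℂ))

open Set Real

section Oscillation

variable {h h' : ℝ → ℝ}

theorem abs_sub_le_integral_abs_deriv (hd : ∀ t, HasDerivAt h (h' t) t) (hc : Continuous h')
    {u v : ℝ} (huv : u ≤ v) : |h v - h u| ≤ ∫ t in u..v, |h' t| := by
  rw [← integral_eq_sub_of_hasDerivAt (fun t _ => hd t) (hc.intervalIntegrable u v)]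
  exact abs_integral_le_integral_abs huv

theorem two_mul_abs_sub_le_integral_abs_deriv_of_le (hd : ∀ t, HasDerivAt h (h' t) t)
    (hc : Continuous h') {a b u v : ℝ} (hab : h a = h b) (hau : a ≤ u) (huv : u ≤ v)
    (hvb : v ≤ b) : 2 * |h v - h u| ≤ ∫ t in a..b, |h' t| := by
  have hI : ∀ p q, IntervalIntegrable (fun t => |h' t|) volume p q :=
    fun p q => hc.abs.intervalIntegrable p q
  have direct := abs_sub_le_integral_abs_deriv hd hc huv
  have around : |h v - h u| ≤ (∫ t in a..u, |h' t|) + ∫ t in v..b, |h' t| :=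
    calc |h v - h u| = |(h u - h a) + (h b - h v)| := by rw [abs_sub_comm, hab]; ring_nf
      _ ≤ |h u - h a| + |h b - h v| := abs_add_le _ _
      _ ≤ _ := add_le_add (abs_sub_le_integral_abs_deriv hd hc hau)
        (abs_sub_le_integral_abs_deriv hd hc hvb)
  have split : (∫ t in a..u, |h' t|) + (∫ t in u..v, |h' t|) + (∫ t in v..b, |h' t|)
      = ∫ t in a..b, |h' t| := by
    rw [integral_add_adjacent_intervals (hI a u) (hI u v),
      integral_add_adjacent_intervals (hI a v) (hI v b)]
  linarith

theorem two_mul_abs_sub_le_integral_abs_deriv (hd : ∀ t, HasDerivAt h (h' t) t)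
    (hc : Continuous h') {a b u v : ℝ} (hab : h a = h b) (hu : u ∈ Icc a b) (hv : v ∈ Icc a b) :
    2 * |h v - h u| ≤ ∫ t in a..b, |h' t| := by
  rcases le_total u v with huv | hvu
  · exact two_mul_abs_sub_le_integral_abs_deriv_of_le hd hc hab hu.1 huv hv.2
  · rw [abs_sub_comm]
    exact two_mul_abs_sub_le_integral_abs_deriv_of_le hd hc hab hv.1 hvu hu.2

theorem le_average_add_half_integral_abs_deriv (hd : ∀ t, HasDerivAt h (h' t) t)
    (hc : Continuous h') {a b x : ℝ} (hlt : a < b) (hab : h a = h b) (hx : x ∈ Icc a b) :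
    h x ≤ (∫ t in a..b, h t) / (b - a) + (1 / 2) * ∫ t in a..b, |h' t| := by
  have hhc : Continuous h := continuous_iff_continuousAt.2 fun t => (hd t).continuousAt
  have hlen : 0 < b - a := sub_pos.2 hlt
  have hosc : ∫ θ in a..b, (h x - h θ) ≤ ∫ θ in a..b, (1 / 2) * ∫ t in a..b, |h' t| :=
    integral_mono_on hlt.le ((continuous_const.sub hhc).intervalIntegrable _ _)
      intervalIntegrable_const fun θ hθ => by
        linarith [le_abs_self (h x - h θ), two_mul_abs_sub_le_integral_abs_deriv hd hc hab hθ hx]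
  rw [integral_sub intervalIntegrable_const (hhc.intervalIntegrable _ _),
    intervalIntegral.integral_const, intervalIntegral.integral_const, smul_eq_mul,
    smul_eq_mul] at hosc
  rw [div_add' _ _ _ hlen.ne', le_div_iff₀ hlen]
  linarith

end Oscillation

theorem integral_norm_mul_norm_le_sqrt_mul_sqrt {E : Type*} [NormedAddCommGroup E]
    {f g : ℝ → E} (hf : Continuous f) (hg : Continuous g) {a b : ℝ} (hab : a ≤ b) :
    ∫ t in a..b, ‖f t‖ * ‖g t‖
      ≤ √(∫ t in a..b, ‖f t‖ ^ 2) * √(∫ t in a..b, ‖g t‖ ^ 2) := by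
  have memL2 : ∀ u : ℝ → E, Continuous u →
      MemLp u (ENNReal.ofReal 2) (volume.restrict (Ioc a b)) := fun u hu => by
    obtain ⟨C, hC⟩ :=
      (isCompact_Icc (a := a) (b := b)).exists_bound_of_continuousOn hu.continuousOn
    exact MemLp.of_bound hu.aestronglyMeasurable C ((ae_restrict_iff' measurableSet_Ioc).2
      (ae_of_all _ fun t ht => hC t (Ioc_subset_Icc_self ht)))
  have H := integral_mul_norm_le_Lp_mul_Lq HolderConjugate.two_two (memL2 f hf) (memL2 g hg)
  simp only [rpow_two, ← sqrt_eq_rpow] at H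
  simpa only [integral_of_le hab] using H

theorem integral_norm_pow_six_le {E : Type*} [NormedAddCommGroup E] {f : ℝ → E}
    (hf : Continuous f) {a b M : ℝ} (hab : a ≤ b) (hM : ∀ x ∈ Icc a b, ‖f x‖ ^ 2 ≤ M) :
    ∫ t in a..b, ‖f t‖ ^ 6 ≤ M ^ 2 * ∫ t in a..b, ‖f t‖ ^ 2 := by
  rw [← intervalIntegral.integral_const_mul]
  refine integral_mono_on hab ((hf.norm.pow 6).intervalIntegrable _ _)
    ((continuous_const.mul (hf.norm.pow 2)).intervalIntegrable _ _) fun x hx => ?_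
  have hcube : ‖f x‖ ^ 6 = (‖f x‖ ^ 2) ^ 2 * ‖f x‖ ^ 2 := by ring
  rw [hcube]
  gcongr
  exact hM x hx

theorem sq_norm_le_average_add_sqrt_mul_sqrt {E : Type*} [NormedAddCommGroup E]
    [InnerProductSpace ℝ E] {f : ℝ → E} {a b : ℝ} (hf : ContDiff ℝ 1 f) (hlt : a < b)
    (hab : f a = f b) {x : ℝ} (hx : x ∈ Icc a b) :
    ‖f x‖ ^ 2 ≤ (∫ t in a..b, ‖f t‖ ^ 2) / (b - a)
      + √(∫ t in a..b, ‖f t‖ ^ 2) * √(∫ t in a..b, ‖deriv f t‖ ^ 2) := by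
  have hfd : Differentiable ℝ f := hf.differentiable one_ne_zero
  have hf'c : Continuous (deriv f) := hf.continuous_deriv le_rfl
  have hd : ∀ t, HasDerivAt (fun t => ‖f t‖ ^ 2) (2 * inner ℝ (f t) (deriv f t)) t :=
    fun t => (hfd t).hasDerivAt.norm_sq
  have hc : Continuous fun t => 2 * inner ℝ (f t) (deriv f t) :=
    continuous_const.mul (hfd.continuous.inner hf'c)
  have hvar : (1 / 2) * ∫ t in a..b, |2 * inner ℝ (f t) (deriv f t)|
      ≤ ∫ t in a..b, ‖f t‖ * ‖deriv f t‖ := by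
    rw [← intervalIntegral.integral_const_mul]
    refine integral_mono_on hlt.le ((continuous_const.mul hc.abs).intervalIntegrable _ _)
      ((hfd.continuous.norm.mul hf'c.norm).intervalIntegrable _ _) fun t _ => ?_
    rw [abs_mul, abs_two]
    linarith [abs_real_inner_le_norm (f t) (deriv f t)]
  linarith [le_average_add_half_integral_abs_deriv hd hc hlt (by simp only [hab]) hx,
    integral_norm_mul_norm_le_sqrt_mul_sqrt hfd.continuous hf'c hlt.le]

/-- the Gagliardo–Nirenberg inequality
`‖f‖³_{L⁶} ≤ ‖f‖_{Ḣ¹} ‖f‖²_{L²} + (1/2π) ‖f‖³_{L²}` on the torus. -/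
theorem stmt5 (f : ℝ → ℂ) (hf : ContDiff ℝ 1 f) (hper : Function.Periodic f (2 * Real.pi)) :
    (∫ x in (0:ℝ)..(2 * Real.pi), ‖f x‖ ^ 6) ^ ((1:ℝ)/2)
      ≤ (∫ x in (0:ℝ)..(2 * Real.pi), ‖deriv f x‖ ^ 2) ^ ((1:ℝ)/2)
          * (∫ x in (0:ℝ)..(2 * Real.pi), ‖f x‖ ^ 2)
        + (1 / (2 * Real.pi)) * (∫ x in (0:ℝ)..(2 * Real.pi), ‖f x‖ ^ 2) ^ ((3:ℝ)/2) := by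
  have hT : (0:ℝ) < 2 * π := by positivity
  set S := ∫ x in (0:ℝ)..(2 * π), ‖f x‖ ^ 2
  set D := ∫ x in (0:ℝ)..(2 * π), ‖deriv f x‖ ^ 2
  set M := S / (2 * π) + √S * √D with hM_def
  have hS : 0 ≤ S := integral_nonneg hT.le fun x _ => by positivity
  have hM : 0 ≤ M := by positivity
  have hsup : ∀ x ∈ Icc 0 (2 * π), ‖f x‖ ^ 2 ≤ M := fun x hx => by
    simpa using sq_norm_le_average_add_sqrt_mul_sqrt hf hT (by simpa using (hper 0).symm) hx
  have hL6 := integral_norm_pow_six_le hf.continuous hT.le hsup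
  have hS32 : S ^ ((3:ℝ) / 2) = S * √S := by
    rw [show (3:ℝ) / 2 = 1 + 1 / 2 by norm_num, rpow_add' hS (by norm_num), rpow_one, sqrt_eq_rpow]
  rw [← sqrt_eq_rpow, ← sqrt_eq_rpow, hS32]
  calc √(∫ x in (0:ℝ)..(2 * π), ‖f x‖ ^ 6) ≤ √(M ^ 2 * S) := sqrt_le_sqrt hL6
    _ = M * √S := by rw [sqrt_mul (sq_nonneg M), sqrt_sq hM]
    _ = √D * S + 1 / (2 * π) * (S * √S) := by
      rw [hM_def]
      linear_combination √D * mul_self_sqrt hS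
end
end

section
/- For every N ≥ 2, Σ_{n=1}^{N} (1/n²) log(1 + (2n-1)/(N-n+1)) ≤ C (log N)/√N for an absolute constant C. -/
/-- `Σ_{n=1}^{N} (1/n²) log(1 + (2n-1)/(N-n+1)) ≤ C (log N)/√N`
for every `N ≥ 2`, with an absolute constant `C`. -/
theorem stmt11 :
    ∃ C : ℝ, 0 < C ∧
      ∀ N : ℕ, 2 ≤ N →
        ∑ n ∈ Finset.Icc 1 N,
            (1 / (n : ℝ) ^ 2) * Real.log (1 + (2 * (n : ℝ) - 1) / ((N : ℝ) - (n : ℝ) + 1))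
          ≤ C * Real.log N / Real.sqrt N := by
  refine ⟨12, by norm_num, fun N hN => ?_⟩
  have hN2 : (2:ℝ) ≤ (N:ℝ) := by exact_mod_cast hN
  have hlogN : 0 < Real.log N := Real.log_pos (by linarith)
  -- pointwise bound
  have key : ∀ n ∈ Finset.Icc 1 N,
      (1 / (n : ℝ) ^ 2) * Real.log (1 + (2 * (n : ℝ) - 1) / ((N : ℝ) - (n : ℝ) + 1))
        ≤ (2/((N:ℝ)+1)) * (1/(n:ℝ) + 1/((N:ℝ)-(n:ℝ)+1)) := by
    intro n hn
    obtain ⟨h1, h2⟩ := Finset.mem_Icc.mp hn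
    have hn1 : (1:ℝ) ≤ (n:ℝ) := by exact_mod_cast h1
    have hnN : (n:ℝ) ≤ (N:ℝ) := by exact_mod_cast h2
    have hden : (0:ℝ) < (N:ℝ) - (n:ℝ) + 1 := by linarith
    have hnpos : (0:ℝ) < (n:ℝ) := by linarith
    have hlog : Real.log (1 + (2 * (n:ℝ) - 1) / ((N:ℝ) - (n:ℝ) + 1))
        ≤ (2 * (n:ℝ) - 1) / ((N:ℝ) - (n:ℝ) + 1) := by
      have hx : 0 ≤ (2 * (n:ℝ) - 1) / ((N:ℝ) - (n:ℝ) + 1) :=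
        div_nonneg (by linarith) hden.le
      have := Real.log_le_sub_one_of_pos (show (0:ℝ) < 1 + (2 * (n:ℝ) - 1) / ((N:ℝ) - (n:ℝ) + 1) by linarith)
      linarith
    have hr : (2/((N:ℝ)+1)) * (1/(n:ℝ) + 1/((N:ℝ)-(n:ℝ)+1)) = 2/((n:ℝ)*((N:ℝ)-(n:ℝ)+1)) := by
      field_simp
      ring
    rw [hr]
    calc (1 / (n : ℝ) ^ 2) * Real.log (1 + (2 * (n:ℝ) - 1) / ((N:ℝ) - (n:ℝ) + 1))
        ≤ (1 / (n : ℝ) ^ 2) * ((2 * (n:ℝ) - 1) / ((N:ℝ) - (n:ℝ) + 1)) :=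
          mul_le_mul_of_nonneg_left hlog (by positivity)
      _ ≤ 2/((n:ℝ)*((N:ℝ)-(n:ℝ)+1)) := by
          rw [div_mul_div_comm, div_le_div_iff₀ (by positivity) (by positivity)]
          nlinarith
  have hsum := Finset.sum_le_sum key
  -- reindex the second sum
  have hswap : ∑ n ∈ Finset.Icc 1 N, 1/((N:ℝ)-(n:ℝ)+1) = ∑ n ∈ Finset.Icc 1 N, 1/(n:ℝ) := by
    rw [Finset.sum_congr rfl (g := fun n => 1/((N+1-n : ℕ) : ℝ))
      (fun n hn => by
        obtain ⟨h1, h2⟩ := Finset.mem_Icc.mp hn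
        congr 1
        have : n ≤ N + 1 := by omega
        push_cast [Nat.cast_sub this]
        ring)]
    apply Finset.sum_nbij' (fun n => N + 1 - n) (fun n => N + 1 - n)
    · intro a ha; simp only [Finset.mem_Icc] at *; omega
    · intro a ha; simp only [Finset.mem_Icc] at *; omega
    · intro a ha; simp only [Finset.mem_Icc] at *; omega
    · intro a ha; simp only [Finset.mem_Icc] at *; omega
    · intro a ha; rfl
  have hH : ∑ n ∈ Finset.Icc 1 N, 1/(n:ℝ) ≤ 1 + Real.log N := by
    have := harmonic_le_one_add_log N
    rw [harmonic_eq_sum_Icc] at this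
    push_cast at this
    simpa [one_div] using this
  have hlog2 : Real.log 2 ≤ Real.log N := Real.log_le_log (by norm_num) hN2
  have h2pos : (0.69:ℝ) < Real.log 2 := by
    have := Real.log_two_gt_d9
    linarith
  have h1le : (1:ℝ) ≤ 1.5 * Real.log N := by nlinarith
  have hbound : ∑ n ∈ Finset.Icc 1 N,
      (1 / (n : ℝ) ^ 2) * Real.log (1 + (2 * (n : ℝ) - 1) / ((N : ℝ) - (n : ℝ) + 1))
      ≤ 10 * Real.log N / ((N:ℝ)+1) := by
    calc _ ≤ ∑ n ∈ Finset.Icc 1 N, (2/((N:ℝ)+1)) * (1/(n:ℝ) + 1/((N:ℝ)-(n:ℝ)+1)) := hsum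
      _ = (2/((N:ℝ)+1)) * (∑ n ∈ Finset.Icc 1 N, 1/(n:ℝ) + ∑ n ∈ Finset.Icc 1 N, 1/((N:ℝ)-(n:ℝ)+1)) := by
          rw [← Finset.sum_add_distrib, Finset.mul_sum]
      _ = (4/((N:ℝ)+1)) * ∑ n ∈ Finset.Icc 1 N, 1/(n:ℝ) := by rw [hswap]; ring
      _ ≤ (4/((N:ℝ)+1)) * (1 + Real.log N) := by
          apply mul_le_mul_of_nonneg_left hH (by positivity)
      _ ≤ (4/((N:ℝ)+1)) * (2.5 * Real.log N) := by
          apply mul_le_mul_of_nonneg_left (by linarith) (by positivity)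
      _ = 10 * Real.log N / ((N:ℝ)+1) := by ring
  refine hbound.trans ?_
  have hsq : Real.sqrt N ≤ (N:ℝ) + 1 := by
    nlinarith [Real.sq_sqrt (by positivity : (0:ℝ) ≤ (N:ℝ)), Real.sqrt_nonneg (N:ℝ)]
  have hsqpos : 0 < Real.sqrt N := Real.sqrt_pos.mpr (by linarith)
  rw [div_le_div_iff₀ (by positivity) hsqpos]
  nlinarith [mul_pos hlogN hsqpos]
end

section
/- Let ψ solve the periodic DNLS equation i∂_t ψ + ψ'' = iβ(|ψ|²ψ)' and set φ = 𝒢_α ψ = e^{iα I[ψ]} ψ. Then φ solves i∂_t φ + φ'' + 2iαμ φ' = i c₁ |φ|²φ' + i c₂ φ² φ̄' + c₃ |φ|⁴φ + c₄ μ |φ|²φ + Γ[φ] φ, where μ = (1/2π)||φ||²_{L²}, c₁ = 2(α+β), c₂ = 2α+β, c₃ = -α² - αβ/2, c₄ = -αβ, and Γ[φ] = (3αβ/(4π) + α²/π)||φ||⁴_{L⁴} - α²μ² + (iα/π)∫_T φ' φ̄. -/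
open MeasureTheory intervalIntegral

noncomputable section

/-- The mass `μ[g] = (1/2π)‖g‖²_{L²}`. -/
def massOf (g : ℝ → ℂ) : ℝ := (1 / (2 * Real.pi)) * ∫ y in (0:ℝ)..(2 * Real.pi), ‖g y‖ ^ 2

/-- The functional `Γ[g] = (3αβ/(4π)+α²/π)‖g‖⁴_{L⁴} - α²μ² + (iα/π)∫ g' ḡ`. -/
def GammaF (α β : ℝ) (g : ℝ → ℂ) : ℂ :=
  (((3 * α * β / (4 * Real.pi) + α ^ 2 / Real.pi)
      * ∫ y in (0:ℝ)..(2 * Real.pi), ‖g y‖ ^ 4 : ℝ) : ℂ)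
    - ((α ^ 2 * (massOf g) ^ 2 : ℝ) : ℂ)
    + Complex.I * (α : ℂ) / (Real.pi : ℂ) *
        ∫ y in (0:ℝ)..(2 * Real.pi), deriv g y * (starRingEnd ℂ) (g y)

namespace Stmt17Aux


variable {E : Type*} [NormedAddCommGroup E] [NormedSpace ℝ E]

/-- partial derivative in the first variable -/
def pd1 (u : ℝ × ℝ → E) (p : ℝ × ℝ) : E := fderiv ℝ u p (1, 0)
/-- partial derivative in the second variable -/
def pd2 (u : ℝ × ℝ → E) (p : ℝ × ℝ) : E := fderiv ℝ u p (0, 1)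

theorem contDiff_pd1 {u : ℝ × ℝ → E} (hu : ContDiff ℝ (⊤ : ℕ∞) u) : ContDiff ℝ (⊤ : ℕ∞) (pd1 u) :=
  (hu.fderiv_right (m := (⊤ : ℕ∞)) le_rfl).clm_apply contDiff_const

theorem contDiff_pd2 {u : ℝ × ℝ → E} (hu : ContDiff ℝ (⊤ : ℕ∞) u) : ContDiff ℝ (⊤ : ℕ∞) (pd2 u) :=
  (hu.fderiv_right (m := (⊤ : ℕ∞)) le_rfl).clm_apply contDiff_const

theorem hasDerivAt_pd1 {u : ℝ × ℝ → E} (hu : ContDiff ℝ (⊤ : ℕ∞) u) (s y : ℝ) :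
    HasDerivAt (fun s' => u (s', y)) (pd1 u (s, y)) s := by
  have h1 : HasFDerivAt u (fderiv ℝ u (s, y)) (s, y) :=
    (hu.differentiable (by simp) (s, y)).hasFDerivAt
  have h2 : HasDerivAt (fun s' : ℝ => (s', y)) ((1 : ℝ), (0 : ℝ)) s := by
    simpa using ((hasDerivAt_id s).prodMk (hasDerivAt_const s y))
  exact (h1.comp_hasDerivAt s h2)

theorem hasDerivAt_pd2 {u : ℝ × ℝ → E} (hu : ContDiff ℝ (⊤ : ℕ∞) u) (s y : ℝ) :
    HasDerivAt (fun y' => u (s, y')) (pd2 u (s, y)) y := by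
  have h1 : HasFDerivAt u (fderiv ℝ u (s, y)) (s, y) :=
    (hu.differentiable (by simp) (s, y)).hasFDerivAt
  have h2 : HasDerivAt (fun y' : ℝ => (s, y')) ((0 : ℝ), (1 : ℝ)) y := by
    simpa using ((hasDerivAt_const y s).prodMk (hasDerivAt_id y))
  exact (h1.comp_hasDerivAt y h2)

/-- Workhorse: derivative of a parametric interval integral, continuous data. -/
theorem hasDerivAt_parametric [CompleteSpace E] {F F' : ℝ → ℝ → E} {a b s₀ : ℝ}
    (hmeas : ∀ s, Continuous (F s))
    (hF' : Continuous (Function.uncurry F'))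
    (hd : ∀ s y, HasDerivAt (fun s' => F s' y) (F' s y) s) :
    HasDerivAt (fun s => ∫ y in a..b, F s y) (∫ y in a..b, F' s₀ y) s₀ := by
  obtain ⟨C, hC⟩ : ∃ C, ∀ p ∈ (Metric.closedBall s₀ 1 ×ˢ Set.uIcc a b), ‖Function.uncurry F' p‖ ≤ C :=
    ((isCompact_closedBall s₀ 1).prod isCompact_uIcc).exists_bound_of_continuousOn
      hF'.continuousOn
  have key := intervalIntegral.hasDerivAt_integral_of_dominated_loc_of_deriv_le
    (F := F) (F' := F') (x₀ := s₀) (a := a) (b := b) (bound := fun _ => C)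
    (μ := volume) (Metric.ball_mem_nhds s₀ one_pos)
    (Filter.Eventually.of_forall fun s => ((hmeas s).aestronglyMeasurable))
    ((hmeas s₀).intervalIntegrable a b)
    ((hF'.comp (Continuous.prodMk_right s₀)).aestronglyMeasurable)
    ?_ (intervalIntegrable_const) ?_
  · exact key.2
  · refine Filter.Eventually.of_forall fun y hy x hx => ?_
    exact hC (x, y) ⟨Metric.ball_subset_closedBall hx,
      Set.mem_of_subset_of_mem Set.uIoc_subset_uIcc hy⟩
  · exact Filter.Eventually.of_forall fun y _ x _ => hd x y



theorem norm_sq_eq (z : ℂ) : ‖z‖ ^ 2 = z.re ^ 2 + z.im ^ 2 := by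
  rw [Complex.sq_norm, Complex.normSq_apply]; ring

def Q (u : ℝ × ℝ → ℂ) (p : ℝ × ℝ) : ℝ := (u p).re ^ 2 + (u p).im ^ 2
def QX (u : ℝ × ℝ → ℂ) (p : ℝ × ℝ) : ℝ :=
  2 * ((u p).re * (pd2 u p).re + (u p).im * (pd2 u p).im)
def QT (u : ℝ × ℝ → ℂ) (p : ℝ × ℝ) : ℝ :=
  2 * ((u p).re * (pd1 u p).re + (u p).im * (pd1 u p).im)
def GG (β : ℝ) (u : ℝ × ℝ → ℂ) (p : ℝ × ℝ) : ℝ :=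
  3 * β / 2 * (Q u p) ^ 2 - 2 * ((u p).re * (pd2 u p).im - (u p).im * (pd2 u p).re)
def GY (β : ℝ) (u : ℝ × ℝ → ℂ) (p : ℝ × ℝ) : ℝ :=
  3 * β * (Q u p) * (QX u p)
    - 2 * ((u p).re * (pd2 (pd2 u) p).im - (u p).im * (pd2 (pd2 u) p).re)

theorem Q_eq_norm (u : ℝ × ℝ → ℂ) (p : ℝ × ℝ) : Q u p = ‖u p‖ ^ 2 :=
  (norm_sq_eq (u p)).symm

section cont
variable {u : ℝ × ℝ → ℂ} {β : ℝ}

theorem continuous_Q (hu : ContDiff ℝ (⊤ : ℕ∞) u) : Continuous (Q u) := by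
  have h := hu.continuous
  unfold Q; fun_prop

theorem continuous_QX (hu : ContDiff ℝ (⊤ : ℕ∞) u) : Continuous (QX u) := by
  have h := hu.continuous; have h2 := (contDiff_pd2 hu).continuous
  unfold QX; fun_prop

theorem continuous_QT (hu : ContDiff ℝ (⊤ : ℕ∞) u) : Continuous (QT u) := by
  have h := hu.continuous; have h2 := (contDiff_pd1 hu).continuous
  unfold QT; fun_prop

theorem continuous_GG (hu : ContDiff ℝ (⊤ : ℕ∞) u) : Continuous (GG β u) := by
  have h := hu.continuous; have h2 := (contDiff_pd2 hu).continuous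
  unfold GG Q; fun_prop

theorem continuous_GY (hu : ContDiff ℝ (⊤ : ℕ∞) u) : Continuous (GY β u) := by
  have h := hu.continuous; have h2 := (contDiff_pd2 hu).continuous
  have h3 := (contDiff_pd2 (contDiff_pd2 hu)).continuous
  unfold GY Q QX; fun_prop

end cont

/-- real part of a complex-valued curve derivative -/
theorem derivRe {g : ℝ → ℂ} {d : ℂ} {x : ℝ} (h : HasDerivAt g d x) :
    HasDerivAt (fun y => (g y).re) d.re x := by
  exact (Complex.reCLM.hasFDerivAt.comp_hasDerivAt x h)

theorem derivIm {g : ℝ → ℂ} {d : ℂ} {x : ℝ} (h : HasDerivAt g d x) :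
    HasDerivAt (fun y => (g y).im) d.im x := by
  exact (Complex.imCLM.hasFDerivAt.comp_hasDerivAt x h)

section derivs
variable {u : ℝ × ℝ → ℂ} {β : ℝ}

theorem hasDerivAt_Q_snd (hu : ContDiff ℝ (⊤ : ℕ∞) u) (s y : ℝ) :
    HasDerivAt (fun y' => Q u (s, y')) (QX u (s, y)) y := by
  have h := hasDerivAt_pd2 hu s y
  have := (((derivRe h).mul (derivRe h)).add ((derivIm h).mul (derivIm h)))
  convert this using 1
  · rfl
  · rfl
  · ext y'; simp only [Q, Pi.add_apply, Pi.mul_apply]; ring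
  · simp only [QX]; ring

theorem hasDerivAt_Q_fst (hu : ContDiff ℝ (⊤ : ℕ∞) u) (s y : ℝ) :
    HasDerivAt (fun s' => Q u (s', y)) (QT u (s, y)) s := by
  have h := hasDerivAt_pd1 hu s y
  have := (((derivRe h).mul (derivRe h)).add ((derivIm h).mul (derivIm h)))
  convert this using 1
  · rfl
  · rfl
  · ext s'; simp only [Q, Pi.add_apply, Pi.mul_apply]; ring
  · simp only [QT]; ring

theorem hasDerivAt_GG_snd (hu : ContDiff ℝ (⊤ : ℕ∞) u) (s y : ℝ) :
    HasDerivAt (fun y' => GG β u (s, y')) (GY β u (s, y)) y := by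
  have h := hasDerivAt_pd2 hu s y
  have h2 := hasDerivAt_pd2 (contDiff_pd2 hu) s y
  have hq := hasDerivAt_Q_snd hu s y
  have key := (((hq.mul hq).const_mul (3*β/2)).sub
    ((((derivRe h).mul (derivIm h2)).sub ((derivIm h).mul (derivRe h2))).const_mul 2))
  convert key using 1
  · rfl
  · rfl
  · ext y'; simp only [GG, Pi.sub_apply, Pi.mul_apply]; ring
  · simp only [GY, QX]; ring

end derivs

/-- The pointwise DNLS algebra: `∂ₜ|ψ|² = ∂ₓ G`. -/
theorem dnls_algebra (β qxv qqv : ℝ) (U Ux Uxx Ut : ℂ)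
    (hqx : qxv = 2 * (U.re * Ux.re + U.im * Ux.im))
    (hqq : qqv = U.re ^ 2 + U.im ^ 2)
    (hE : Complex.I * Ut + Uxx = Complex.I * (β : ℂ) * ((qxv : ℂ) * U + (qqv : ℂ) * Ux)) :
    2 * (U.re * Ut.re + U.im * Ut.im)
      = 3 * β * qqv * qxv - 2 * (U.re * Uxx.im - U.im * Uxx.re) := by
  have hre := congrArg Complex.re hE
  have him := congrArg Complex.im hE
  simp only [Complex.add_re, Complex.add_im, Complex.mul_re, Complex.mul_im,
    Complex.I_re, Complex.I_im, Complex.ofReal_re, Complex.ofReal_im,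
    zero_mul, one_mul, mul_zero, mul_one, zero_add, add_zero, zero_sub, sub_zero] at hre him
  subst hqx hqq
  linear_combination (2*U.re)*him - (2*U.im)*hre



section psi
variable {β : ℝ} {ψ : ℝ → ℝ → ℂ}

/-- the mass integral -/
def MM (ψ : ℝ → ℝ → ℂ) (s : ℝ) : ℝ :=
  ∫ y in (0:ℝ)..(2 * Real.pi), Q (Function.uncurry ψ) (s, y)

theorem massOf_eq (ψ : ℝ → ℝ → ℂ) (s : ℝ) : massOf (ψ s) = (1 / (2 * Real.pi)) * MM ψ s := by
  unfold massOf MM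
  congr 1
  refine intervalIntegral.integral_congr fun y _ => ?_
  exact (Q_eq_norm (Function.uncurry ψ) (s, y)).symm

theorem gaugeDens_eq (ψ : ℝ → ℝ → ℂ) (s y : ℝ) :
    gaugeDens (ψ s) y = Q (Function.uncurry ψ) (s, y) - MM ψ s / (2 * Real.pi) := by
  unfold gaugeDens MM
  rw [Q_eq_norm (Function.uncurry ψ) (s, y)]
  congr 2
  exact intervalIntegral.integral_congr fun y' _ => (Q_eq_norm (Function.uncurry ψ) (s, y')).symm

theorem deriv_curve_fst (hsmooth : ContDiff ℝ (⊤ : ℕ∞) (Function.uncurry ψ)) (s x : ℝ) :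
    deriv (fun s' => ψ s' x) s = pd1 (Function.uncurry ψ) (s, x) :=
  (hasDerivAt_pd1 hsmooth s x).deriv

theorem deriv_psi_eq (hsmooth : ContDiff ℝ (⊤ : ℕ∞) (Function.uncurry ψ)) (s : ℝ) :
    deriv (ψ s) = fun x => pd2 (Function.uncurry ψ) (s, x) :=
  funext fun x => (hasDerivAt_pd2 hsmooth s x).deriv

theorem deriv2_psi_eq (hsmooth : ContDiff ℝ (⊤ : ℕ∞) (Function.uncurry ψ)) (s x : ℝ) :
    deriv (deriv (ψ s)) x = pd2 (pd2 (Function.uncurry ψ)) (s, x) := by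
  rw [deriv_psi_eq hsmooth s]
  exact (hasDerivAt_pd2 (contDiff_pd2 hsmooth) s x).deriv

theorem deriv_cubic (hsmooth : ContDiff ℝ (⊤ : ℕ∞) (Function.uncurry ψ)) (s x : ℝ) :
    deriv (fun y => ((‖ψ s y‖ ^ 2 : ℝ) : ℂ) * ψ s y) x
      = (QX (Function.uncurry ψ) (s, x) : ℂ) * ψ s x
        + (Q (Function.uncurry ψ) (s, x) : ℂ) * pd2 (Function.uncurry ψ) (s, x) := by
  have h1 : HasDerivAt (fun y => ((Q (Function.uncurry ψ) (s, y) : ℝ) : ℂ))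
      ((QX (Function.uncurry ψ) (s, x) : ℂ)) x :=
    (hasDerivAt_Q_snd hsmooth s x).ofReal_comp
  have h2 := hasDerivAt_pd2 hsmooth s x
  have key := h1.mul h2
  have heq : (fun y => ((‖ψ s y‖ ^ 2 : ℝ) : ℂ) * ψ s y)
      = fun y => ((Q (Function.uncurry ψ) (s, y) : ℝ) : ℂ) * ψ s y := by
    funext y; rw [Q_eq_norm]; rfl
  rw [heq]
  exact key.deriv

/-- DNLS in partial-derivative form. -/
theorem hE_pd (hsmooth : ContDiff ℝ (⊤ : ℕ∞) (Function.uncurry ψ))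
    (hDNLS : ∀ t x : ℝ,
      Complex.I * deriv (fun s => ψ s x) t + deriv (deriv (ψ t)) x
        = Complex.I * (β : ℂ) * deriv (fun y => ((‖ψ t y‖ ^ 2 : ℝ) : ℂ) * ψ t y) x)
    (s x : ℝ) :
    Complex.I * pd1 (Function.uncurry ψ) (s, x) + pd2 (pd2 (Function.uncurry ψ)) (s, x)
      = Complex.I * (β : ℂ) * ((QX (Function.uncurry ψ) (s, x) : ℂ) * ψ s x
        + (Q (Function.uncurry ψ) (s, x) : ℂ) * pd2 (Function.uncurry ψ) (s, x)) := by
  have := hDNLS s x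
  rwa [deriv_curve_fst hsmooth, deriv2_psi_eq hsmooth, deriv_cubic hsmooth] at this

theorem QT_eq_GY (hsmooth : ContDiff ℝ (⊤ : ℕ∞) (Function.uncurry ψ))
    (hDNLS : ∀ t x : ℝ,
      Complex.I * deriv (fun s => ψ s x) t + deriv (deriv (ψ t)) x
        = Complex.I * (β : ℂ) * deriv (fun y => ((‖ψ t y‖ ^ 2 : ℝ) : ℂ) * ψ t y) x)
    (s x : ℝ) :
    QT (Function.uncurry ψ) (s, x) = GY β (Function.uncurry ψ) (s, x) :=
  dnls_algebra β _ _ (ψ s x) _ _ _ rfl rfl (hE_pd hsmooth hDNLS s x)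

/-- periodicity of the second partial derivative -/
theorem pd2_periodic (hsmooth : ContDiff ℝ (⊤ : ℕ∞) (Function.uncurry ψ))
    (hper : ∀ t : ℝ, Function.Periodic (ψ t) (2 * Real.pi)) (s y : ℝ) :
    pd2 (Function.uncurry ψ) (s, y + 2 * Real.pi) = pd2 (Function.uncurry ψ) (s, y) := by
  have h1 := hasDerivAt_pd2 hsmooth s (y + 2 * Real.pi)
  have h2 : HasDerivAt (fun y' : ℝ => y' + 2 * Real.pi) 1 y := by
    simpa using (hasDerivAt_id y).add_const (2 * Real.pi)
  have h1' : HasDerivAt (fun y' => Function.uncurry ψ (s, y'))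
      (pd2 (Function.uncurry ψ) (s, y + 2 * Real.pi)) ((fun y' : ℝ => y' + 2 * Real.pi) y) := h1
  have h3 := HasDerivAt.scomp y h1' h2
  have heq : ((fun y' => Function.uncurry ψ (s, y')) ∘ fun y' : ℝ => y' + 2 * Real.pi)
      = fun y' => Function.uncurry ψ (s, y') := by
    funext y'; exact hper s y'
  rw [heq, one_smul] at h3
  exact h3.unique (hasDerivAt_pd2 hsmooth s y)

theorem pd2pd2_periodic (hsmooth : ContDiff ℝ (⊤ : ℕ∞) (Function.uncurry ψ))
    (hper : ∀ t : ℝ, Function.Periodic (ψ t) (2 * Real.pi)) (s y : ℝ) :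
    pd2 (pd2 (Function.uncurry ψ)) (s, y + 2 * Real.pi)
      = pd2 (pd2 (Function.uncurry ψ)) (s, y) := by
  have h1 := hasDerivAt_pd2 (contDiff_pd2 hsmooth) s (y + 2 * Real.pi)
  have h2 : HasDerivAt (fun y' : ℝ => y' + 2 * Real.pi) 1 y := by
    simpa using (hasDerivAt_id y).add_const (2 * Real.pi)
  have h1' : HasDerivAt (fun y' => pd2 (Function.uncurry ψ) (s, y'))
      (pd2 (pd2 (Function.uncurry ψ)) (s, y + 2 * Real.pi)) ((fun y' : ℝ => y' + 2 * Real.pi) y) := h1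
  have h3 := HasDerivAt.scomp y h1' h2
  have heq : ((fun y' => pd2 (Function.uncurry ψ) (s, y')) ∘ fun y' : ℝ => y' + 2 * Real.pi)
      = fun y' => pd2 (Function.uncurry ψ) (s, y') := by
    funext y'
    exact pd2_periodic hsmooth hper s y'
  rw [heq, one_smul] at h3
  exact h3.unique (hasDerivAt_pd2 (contDiff_pd2 hsmooth) s y)

theorem psi_periodic_pt (hper : ∀ t : ℝ, Function.Periodic (ψ t) (2 * Real.pi)) (s y : ℝ) :
    Function.uncurry ψ (s, y + 2 * Real.pi) = Function.uncurry ψ (s, y) := hper s y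

theorem GG_periodic (hsmooth : ContDiff ℝ (⊤ : ℕ∞) (Function.uncurry ψ))
    (hper : ∀ t : ℝ, Function.Periodic (ψ t) (2 * Real.pi)) (s y : ℝ) :
    GG β (Function.uncurry ψ) (s, y + 2 * Real.pi) = GG β (Function.uncurry ψ) (s, y) := by
  unfold GG Q
  rw [psi_periodic_pt hper, pd2_periodic hsmooth hper]

/-- FTC for `GY`. -/
theorem integral_GY (hsmooth : ContDiff ℝ (⊤ : ℕ∞) (Function.uncurry ψ)) (s a b : ℝ) :
    ∫ y in a..b, GY β (Function.uncurry ψ) (s, y)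
      = GG β (Function.uncurry ψ) (s, b) - GG β (Function.uncurry ψ) (s, a) :=
  intervalIntegral.integral_eq_sub_of_hasDerivAt
    (fun y _ => hasDerivAt_GG_snd hsmooth s y)
    (((continuous_GY hsmooth).comp (Continuous.prodMk_right s)).intervalIntegrable a b)

/-- Mass conservation. -/
theorem MM_deriv (hsmooth : ContDiff ℝ (⊤ : ℕ∞) (Function.uncurry ψ))
    (hper : ∀ t : ℝ, Function.Periodic (ψ t) (2 * Real.pi))
    (hDNLS : ∀ t x : ℝ,
      Complex.I * deriv (fun s => ψ s x) t + deriv (deriv (ψ t)) x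
        = Complex.I * (β : ℂ) * deriv (fun y => ((‖ψ t y‖ ^ 2 : ℝ) : ℂ) * ψ t y) x)
    (s : ℝ) : HasDerivAt (MM ψ) 0 s := by
  have key : HasDerivAt (MM ψ)
      (∫ y in (0:ℝ)..(2 * Real.pi), QT (Function.uncurry ψ) (s, y)) s := by
    apply hasDerivAt_parametric (F := fun s y => Q (Function.uncurry ψ) (s, y))
      (F' := fun s y => QT (Function.uncurry ψ) (s, y))
    · exact fun s' => (continuous_Q hsmooth).comp (Continuous.prodMk_right s')
    · show Continuous fun p : ℝ × ℝ => QT (Function.uncurry ψ) (p.1, p.2)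
      exact (continuous_QT hsmooth).comp (continuous_fst.prodMk continuous_snd)
    · exact fun s' y => hasDerivAt_Q_fst hsmooth s' y
  have hz : (∫ y in (0:ℝ)..(2 * Real.pi), QT (Function.uncurry ψ) (s, y)) = 0 := by
    rw [intervalIntegral.integral_congr
      (fun y _ => (QT_eq_GY (β := β) hsmooth hDNLS s y : _)), integral_GY hsmooth]
    have := GG_periodic (β := β) hsmooth hper s 0
    rw [zero_add] at this
    rw [this, sub_self]
  rwa [hz] at key

end psi


section psi2
variable {β : ℝ} {ψ : ℝ → ℝ → ℂ}

theorem continuous_dens (hsmooth : ContDiff ℝ (⊤ : ℕ∞) (Function.uncurry ψ)) (s : ℝ) :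
    Continuous (gaugeDens (ψ s)) := by
  have : gaugeDens (ψ s) = fun y =>
      Q (Function.uncurry ψ) (s, y) - MM ψ s / (2 * Real.pi) :=
    funext fun y => gaugeDens_eq ψ s y
  rw [this]
  exact (((continuous_Q hsmooth).comp (Continuous.prodMk_right s)).sub continuous_const)

/-- the constant part of the primitive -/
def CC (ψ : ℝ → ℝ → ℂ) (s : ℝ) : ℝ :=
  (1 / (2 * Real.pi)) * ∫ θ in (0:ℝ)..(2 * Real.pi), ∫ y in θ..(0:ℝ), gaugeDens (ψ s) y

theorem continuous_primitive_dens (hsmooth : ContDiff ℝ (⊤ : ℕ∞) (Function.uncurry ψ)) (s : ℝ) :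
    Continuous (fun θ => ∫ y in θ..(0:ℝ), gaugeDens (ψ s) y) := by
  have h1 : Continuous (fun θ => ∫ y in (0:ℝ)..θ, gaugeDens (ψ s) y) :=
    intervalIntegral.continuous_primitive
      (fun a b => ((continuous_dens hsmooth s).intervalIntegrable a b)) 0
  have : (fun θ => ∫ y in θ..(0:ℝ), gaugeDens (ψ s) y)
      = fun θ => -(∫ y in (0:ℝ)..θ, gaugeDens (ψ s) y) :=
    funext fun θ => (intervalIntegral.integral_symm 0 θ)
  rw [this]; exact h1.neg

theorem prim_split (hsmooth : ContDiff ℝ (⊤ : ℕ∞) (Function.uncurry ψ)) (s x : ℝ) :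
    gaugePrim (ψ s) x = CC ψ s + ∫ y in (0:ℝ)..x, gaugeDens (ψ s) y := by
  unfold gaugePrim CC
  have hint : ∀ a b : ℝ, IntervalIntegrable (gaugeDens (ψ s)) volume a b :=
    fun a b => (continuous_dens hsmooth s).intervalIntegrable a b
  have hsplit : ∀ θ : ℝ, (∫ y in θ..x, gaugeDens (ψ s) y)
      = (∫ y in θ..(0:ℝ), gaugeDens (ψ s) y) + ∫ y in (0:ℝ)..x, gaugeDens (ψ s) y :=
    fun θ => (intervalIntegral.integral_add_adjacent_intervals (hint θ 0) (hint 0 x)).symm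
  rw [intervalIntegral.integral_congr (g := fun θ =>
      (∫ y in θ..(0:ℝ), gaugeDens (ψ s) y) + ∫ y in (0:ℝ)..x, gaugeDens (ψ s) y)
      (fun θ _ => hsplit θ)]
  rw [intervalIntegral.integral_add
      ((continuous_primitive_dens hsmooth s).intervalIntegrable 0 (2 * Real.pi))
      intervalIntegrable_const,
    intervalIntegral.integral_const]
  have hpi : (2 * Real.pi) ≠ 0 := by positivity
  field_simp
  ring

theorem hasDerivAt_prim_x (hsmooth : ContDiff ℝ (⊤ : ℕ∞) (Function.uncurry ψ)) (s x : ℝ) :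
    HasDerivAt (gaugePrim (ψ s)) (gaugeDens (ψ s) x) x := by
  have : gaugePrim (ψ s) = fun x => CC ψ s + ∫ y in (0:ℝ)..x, gaugeDens (ψ s) y :=
    funext fun x => prim_split hsmooth s x
  rw [this]
  have key : HasDerivAt (fun x => ∫ y in (0:ℝ)..x, gaugeDens (ψ s) y)
      (gaugeDens (ψ s) x) x :=
    intervalIntegral.integral_hasDerivAt_right
      ((continuous_dens hsmooth s).intervalIntegrable 0 x)
      ((continuous_dens hsmooth s).stronglyMeasurableAtFilter volume (nhds x))
      (continuous_dens hsmooth s).continuousAt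
  exact key.const_add (CC ψ s)

theorem hasDerivAt_dens_x (hsmooth : ContDiff ℝ (⊤ : ℕ∞) (Function.uncurry ψ)) (s x : ℝ) :
    HasDerivAt (gaugeDens (ψ s)) (QX (Function.uncurry ψ) (s, x)) x := by
  have : gaugeDens (ψ s) = fun y =>
      Q (Function.uncurry ψ) (s, y) - MM ψ s / (2 * Real.pi) :=
    funext fun y => gaugeDens_eq ψ s y
  rw [this]
  exact (hasDerivAt_Q_snd hsmooth s x).sub_const _

variable (hsmooth : ContDiff ℝ (⊤ : ℕ∞) (Function.uncurry ψ))
  (hper : ∀ t : ℝ, Function.Periodic (ψ t) (2 * Real.pi))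
  (hDNLS : ∀ t x : ℝ,
      Complex.I * deriv (fun s => ψ s x) t + deriv (deriv (ψ t)) x
        = Complex.I * (β : ℂ) * deriv (fun y => ((‖ψ t y‖ ^ 2 : ℝ) : ℂ) * ψ t y) x)

include hsmooth hper hDNLS

/-- time derivative of `∫_a^b` of the density -/
theorem hasDerivAt_dens_int (a b s₀ : ℝ) :
    HasDerivAt (fun s => ∫ y in a..b, gaugeDens (ψ s) y)
      (GG β (Function.uncurry ψ) (s₀, b) - GG β (Function.uncurry ψ) (s₀, a)) s₀ := by
  have hfun : (fun s => ∫ y in a..b, gaugeDens (ψ s) y)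
      = fun s => (∫ y in a..b, Q (Function.uncurry ψ) (s, y))
          - ((b - a) / (2 * Real.pi)) * MM ψ s := by
    funext s
    rw [intervalIntegral.integral_congr (g := fun y =>
        Q (Function.uncurry ψ) (s, y) - MM ψ s / (2 * Real.pi))
        (fun y _ => gaugeDens_eq ψ s y)]
    have hcQ : Continuous fun y => Q (Function.uncurry ψ) (s, y) :=
      (continuous_Q hsmooth).comp (Continuous.prodMk_right s)
    rw [intervalIntegral.integral_sub (hcQ.intervalIntegrable a b)
        intervalIntegrable_const,
      intervalIntegral.integral_const]
    simp only [smul_eq_mul]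
    ring
  rw [hfun]
  have h1 : HasDerivAt (fun s => ∫ y in a..b, Q (Function.uncurry ψ) (s, y))
      (∫ y in a..b, QT (Function.uncurry ψ) (s₀, y)) s₀ := by
    apply hasDerivAt_parametric (F := fun s y => Q (Function.uncurry ψ) (s, y))
      (F' := fun s y => QT (Function.uncurry ψ) (s, y))
    · exact fun s' => (continuous_Q hsmooth).comp (Continuous.prodMk_right s')
    · show Continuous fun p : ℝ × ℝ => QT (Function.uncurry ψ) (p.1, p.2)
      exact (continuous_QT hsmooth).comp (continuous_fst.prodMk continuous_snd)
    · exact fun s' y => hasDerivAt_Q_fst hsmooth s' y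
  have h2 : HasDerivAt (fun s => ((b - a) / (2 * Real.pi)) * MM ψ s)
      (((b - a) / (2 * Real.pi)) * 0) s₀ :=
    (MM_deriv hsmooth hper hDNLS s₀).const_mul _
  have key := h1.sub h2
  have hval : (∫ y in a..b, QT (Function.uncurry ψ) (s₀, y))
      = GG β (Function.uncurry ψ) (s₀, b) - GG β (Function.uncurry ψ) (s₀, a) := by
    rw [intervalIntegral.integral_congr
      (fun y _ => (QT_eq_GY (β := β) hsmooth hDNLS s₀ y : _)), integral_GY hsmooth]
  rw [hval, mul_zero, sub_zero] at key
  exact key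

/-- time derivative of the primitive -/
theorem hasDerivAt_prim_t (t x : ℝ) :
    HasDerivAt (fun s => gaugePrim (ψ s) x)
      (GG β (Function.uncurry ψ) (t, x)
        - (1 / (2 * Real.pi)) * ∫ θ in (0:ℝ)..(2 * Real.pi), GG β (Function.uncurry ψ) (t, θ))
      t := by
  have hfun : (fun s => gaugePrim (ψ s) x)
      = fun s => CC ψ s + ∫ y in (0:ℝ)..x, gaugeDens (ψ s) y :=
    funext fun s => prim_split hsmooth s x
  rw [hfun]
  have hCC : HasDerivAt (fun s => CC ψ s)
      ((1 / (2 * Real.pi)) * ∫ θ in (0:ℝ)..(2 * Real.pi),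
        (GG β (Function.uncurry ψ) (t, 0) - GG β (Function.uncurry ψ) (t, θ))) t := by
    apply HasDerivAt.const_mul
    apply hasDerivAt_parametric (F := fun s θ => ∫ y in θ..(0:ℝ), gaugeDens (ψ s) y)
      (F' := fun s θ => GG β (Function.uncurry ψ) (s, 0) - GG β (Function.uncurry ψ) (s, θ))
    · exact fun s => continuous_primitive_dens hsmooth s
    · show Continuous fun p : ℝ × ℝ =>
        GG β (Function.uncurry ψ) (p.1, 0) - GG β (Function.uncurry ψ) (p.1, p.2)
      have c1 : Continuous fun p : ℝ × ℝ => GG β (Function.uncurry ψ) (p.1, 0) :=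
        (continuous_GG hsmooth).comp (continuous_fst.prodMk continuous_const)
      have c2 : Continuous fun p : ℝ × ℝ => GG β (Function.uncurry ψ) (p.1, p.2) :=
        (continuous_GG hsmooth).comp (continuous_fst.prodMk continuous_snd)
      exact c1.sub c2
    · exact fun s θ => hasDerivAt_dens_int hsmooth hper hDNLS θ 0 s
  have h2 := hasDerivAt_dens_int hsmooth hper hDNLS 0 x t
  have key := hCC.add h2
  convert key using 1
  · rfl
  · rfl
  · rfl
  have hcGG : Continuous fun θ => GG β (Function.uncurry ψ) (t, θ) :=
    (continuous_GG hsmooth).comp (Continuous.prodMk_right t)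
  rw [intervalIntegral.integral_sub intervalIntegrable_const
      (hcGG.intervalIntegrable 0 (2 * Real.pi)),
    intervalIntegral.integral_const]
  simp only [smul_eq_mul, sub_zero]
  have hpi : Real.pi ≠ 0 := Real.pi_ne_zero
  field_simp
  ring

end psi2



open Complex in
/-- The abstract algebraic identity behind the gauged DNLS computation. -/
theorem final_algebra (a b e ec U cU Ux cUx Uxx Ut q qx mu g avg : ℂ)
    (hee : e * ec = 1)
    (hq : q = U * cU)
    (hqx : qx = Ux * cU + U * cUx)
    (hg : g = 3 * b / 2 * q ^ 2 + I * (cU * Ux - U * cUx))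
    (hE : I * Ut + Uxx = I * b * (qx * U + q * Ux)) :
    I * (I * a * (g - avg) * e * U + e * Ut)
      + (I * a * (q - mu) * e * (I * a * (q - mu) * U + Ux)
          + e * (I * a * (qx * U + (q - mu) * Ux) + Uxx))
      + 2 * I * a * mu * (e * (I * a * (q - mu) * U + Ux))
    = I * (2 * (a + b)) * q * (e * (I * a * (q - mu) * U + Ux))
      + I * (2 * a + b) * (e * U) ^ 2 * (ec * (-(I * a * (q - mu) * cU) + cUx))
      + (-a ^ 2 - a * b / 2) * q ^ 2 * (e * U)
      + (-(a * b)) * mu * q * (e * U)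
      + (a ^ 2 * mu ^ 2 + a * avg) * (e * U) := by
  subst hq hqx hg
  have hI : Complex.I * Complex.I = -1 := Complex.I_mul_I
  linear_combination e * hE
    + (a*b*e*U^2*cU*mu - a*b*e*U^3*cU^2 + 2*a^2*e*U^2*cU*mu - 2*a^2*e*U^3*cU^2
        - I*b*e*U^2*cUx - 2*I*a*e*U^2*cUx) * hee
    + (-(a*e*U*avg) + 2*a*b*e*U^2*cU*mu - a*b*e*U^3*cU^2/2 - a*b*e^2*ec*U^2*cU*mu
        + a*b*e^2*ec*U^3*cU^2 - a^2*e*U*mu^2 + 2*a^2*e*U^2*cU*mu - a^2*e*U^3*cU^2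
        - 2*a^2*e^2*ec*U^2*cU*mu + 2*a^2*e^2*ec*U^3*cU^2 + I*a*e*U*cU*Ux
        - I*a*e*U^2*cUx) * hI



section part6
variable {α β : ℝ} {ψ : ℝ → ℝ → ℂ}

theorem conj_exp_gauge (α r : ℝ) :
    Complex.exp (Complex.I * (α : ℂ) * (r : ℂ))
      * (starRingEnd ℂ) (Complex.exp (Complex.I * (α : ℂ) * (r : ℂ))) = 1 := by
  rw [← Complex.exp_conj]
  rw [← Complex.exp_add]
  have : Complex.I * (α : ℂ) * (r : ℂ) + (starRingEnd ℂ) (Complex.I * (α : ℂ) * (r : ℂ)) = 0 := by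
    simp [map_mul, Complex.conj_I, Complex.conj_ofReal]
  rw [this, Complex.exp_zero]

theorem norm_exp_gauge (α r : ℝ) : ‖Complex.exp (Complex.I * (α : ℂ) * (r : ℂ))‖ = 1 := by
  rw [Complex.norm_exp]
  have : (Complex.I * (α : ℂ) * (r : ℂ)).re = 0 := by
    simp [Complex.mul_re, Complex.mul_im]
  rw [this, Real.exp_zero]

theorem norm_gaugeMap (α : ℝ) (f : ℝ → ℂ) (x : ℝ) : ‖gaugeMap α f x‖ = ‖f x‖ := by
  unfold gaugeMap
  rw [norm_mul, norm_exp_gauge, one_mul]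

theorem mass_gaugeMap (α : ℝ) (f : ℝ → ℂ) : massOf (gaugeMap α f) = massOf f := by
  unfold massOf
  congr 1
  exact intervalIntegral.integral_congr fun y _ => by rw [norm_gaugeMap]

/-- complex cast of `Q` -/
theorem Qc (ψ : ℝ → ℝ → ℂ) (s y : ℝ) :
    ψ s y * (starRingEnd ℂ) (ψ s y) = ((Q (Function.uncurry ψ) (s, y) : ℝ) : ℂ) := by
  rw [Complex.mul_conj]
  exact Complex.ofReal_inj.mpr (by simp [Complex.normSq_apply, Q, Function.uncurry]; ring)

theorem QXc (ψ : ℝ → ℝ → ℂ) (s y : ℝ) :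
    ((QX (Function.uncurry ψ) (s, y) : ℝ) : ℂ)
      = pd2 (Function.uncurry ψ) (s, y) * (starRingEnd ℂ) (ψ s y)
        + ψ s y * (starRingEnd ℂ) (pd2 (Function.uncurry ψ) (s, y)) := by
  apply Complex.ext <;>
    simp [QX, Complex.mul_re, Complex.mul_im, Complex.add_re, Complex.add_im,
      Function.uncurry] <;> ring

theorem GGc (β : ℝ) (ψ : ℝ → ℝ → ℂ) (s y : ℝ) :
    ((GG β (Function.uncurry ψ) (s, y) : ℝ) : ℂ)
      = 3 * (β : ℂ) / 2 * ((Q (Function.uncurry ψ) (s, y) : ℝ) : ℂ) ^ 2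
        + Complex.I * ((starRingEnd ℂ) (ψ s y) * pd2 (Function.uncurry ψ) (s, y)
            - ψ s y * (starRingEnd ℂ) (pd2 (Function.uncurry ψ) (s, y))) := by
  apply Complex.ext <;>
    simp [GG, Complex.mul_re, Complex.mul_im, Complex.add_re, Complex.add_im,
      Complex.sub_re, Complex.sub_im, Function.uncurry] <;> ring

/-- spatial derivative of the gauge map -/
theorem hasDerivAt_gauge_x (hsmooth : ContDiff ℝ (⊤ : ℕ∞) (Function.uncurry ψ)) (s x : ℝ) :
    HasDerivAt (gaugeMap α (ψ s))
      (Complex.exp (Complex.I * (α : ℂ) * (gaugePrim (ψ s) x : ℂ))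
        * (Complex.I * (α : ℂ)
            * (((Q (Function.uncurry ψ) (s, x) : ℝ) : ℂ) - ((massOf (ψ s) : ℝ) : ℂ))
            * ψ s x
          + pd2 (Function.uncurry ψ) (s, x))) x := by
  have hprim : HasDerivAt (fun x' => ((gaugePrim (ψ s) x' : ℝ) : ℂ))
      ((gaugeDens (ψ s) x : ℝ) : ℂ) x := (hasDerivAt_prim_x hsmooth s x).ofReal_comp
  have hexp := (hprim.const_mul (Complex.I * (α : ℂ))).cexp
  have key := hexp.mul (hasDerivAt_pd2 hsmooth s x)
  have hdc : ((gaugeDens (ψ s) x : ℝ) : ℂ)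
      = ((Q (Function.uncurry ψ) (s, x) : ℝ) : ℂ) - ((massOf (ψ s) : ℝ) : ℂ) := by
    rw [gaugeDens_eq ψ s x, massOf_eq ψ s]
    push_cast
    ring
  convert key using 1
  · rfl
  · rfl
  rw [hdc]
  simp only [Function.uncurry_apply_pair]
  ring

/-- second spatial derivative of the gauge map -/
theorem deriv2_gauge_x (hsmooth : ContDiff ℝ (⊤ : ℕ∞) (Function.uncurry ψ)) (s x : ℝ) :
    deriv (deriv (gaugeMap α (ψ s))) x
      = Complex.I * (α : ℂ)
            * (((Q (Function.uncurry ψ) (s, x) : ℝ) : ℂ) - ((massOf (ψ s) : ℝ) : ℂ))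
            * (Complex.exp (Complex.I * (α : ℂ) * (gaugePrim (ψ s) x : ℂ)))
            * (Complex.I * (α : ℂ)
                * (((Q (Function.uncurry ψ) (s, x) : ℝ) : ℂ) - ((massOf (ψ s) : ℝ) : ℂ))
                * ψ s x + pd2 (Function.uncurry ψ) (s, x))
        + (Complex.exp (Complex.I * (α : ℂ) * (gaugePrim (ψ s) x : ℂ)))
            * (Complex.I * (α : ℂ)
                * (((QX (Function.uncurry ψ) (s, x) : ℝ) : ℂ) * ψ s x
                  + (((Q (Function.uncurry ψ) (s, x) : ℝ) : ℂ) - ((massOf (ψ s) : ℝ) : ℂ))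
                      * pd2 (Function.uncurry ψ) (s, x))
              + pd2 (pd2 (Function.uncurry ψ)) (s, x)) := by
  have hd1 : deriv (gaugeMap α (ψ s)) = fun x' =>
      Complex.exp (Complex.I * (α : ℂ) * (gaugePrim (ψ s) x' : ℂ))
        * (Complex.I * (α : ℂ)
            * (((Q (Function.uncurry ψ) (s, x') : ℝ) : ℂ) - ((massOf (ψ s) : ℝ) : ℂ))
            * ψ s x' + pd2 (Function.uncurry ψ) (s, x')) :=
    funext fun x' => (hasDerivAt_gauge_x hsmooth s x').deriv
  rw [hd1]
  have hprim : HasDerivAt (fun x' => ((gaugePrim (ψ s) x' : ℝ) : ℂ))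
      ((gaugeDens (ψ s) x : ℝ) : ℂ) x := (hasDerivAt_prim_x hsmooth s x).ofReal_comp
  have hexp := (hprim.const_mul (Complex.I * (α : ℂ))).cexp
  have hQc : HasDerivAt (fun x' => ((Q (Function.uncurry ψ) (s, x') : ℝ) : ℂ))
      ((QX (Function.uncurry ψ) (s, x) : ℝ) : ℂ) x :=
    (hasDerivAt_Q_snd hsmooth s x).ofReal_comp
  have hinner : HasDerivAt (fun x' =>
      Complex.I * (α : ℂ)
          * (((Q (Function.uncurry ψ) (s, x') : ℝ) : ℂ) - ((massOf (ψ s) : ℝ) : ℂ))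
          * ψ s x' + pd2 (Function.uncurry ψ) (s, x'))
      (Complex.I * (α : ℂ)
          * (((QX (Function.uncurry ψ) (s, x) : ℝ) : ℂ) * ψ s x
            + (((Q (Function.uncurry ψ) (s, x) : ℝ) : ℂ) - ((massOf (ψ s) : ℝ) : ℂ))
                * pd2 (Function.uncurry ψ) (s, x))
        + pd2 (pd2 (Function.uncurry ψ)) (s, x)) x := by
    have h1 := ((hQc.sub_const ((massOf (ψ s) : ℝ) : ℂ)).const_mul
      (Complex.I * (α : ℂ))).mul (hasDerivAt_pd2 hsmooth s x)
    have h2 := h1.add (hasDerivAt_pd2 (contDiff_pd2 hsmooth) s x)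
    convert h2 using 1
    · rfl
    · rfl
    simp only [Function.uncurry_apply_pair]
    ring
  have key := hexp.mul hinner
  refine (key.deriv : _).trans ?_
  have hdc : ((gaugeDens (ψ s) x : ℝ) : ℂ)
      = ((Q (Function.uncurry ψ) (s, x) : ℝ) : ℂ) - ((massOf (ψ s) : ℝ) : ℂ) := by
    rw [gaugeDens_eq ψ s x, massOf_eq ψ s]
    push_cast
    ring
  rw [hdc]
  ring


/-- the average of `GG` -/
def AVG (β : ℝ) (ψ : ℝ → ℝ → ℂ) (t : ℝ) : ℝ :=
  (1 / (2 * Real.pi)) * ∫ θ in (0:ℝ)..(2 * Real.pi), GG β (Function.uncurry ψ) (t, θ)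

/-- time derivative of the gauge map -/
theorem hasDerivAt_gauge_t (hsmooth : ContDiff ℝ (⊤ : ℕ∞) (Function.uncurry ψ))
    (hper : ∀ t : ℝ, Function.Periodic (ψ t) (2 * Real.pi))
    (hDNLS : ∀ t x : ℝ,
      Complex.I * deriv (fun s => ψ s x) t + deriv (deriv (ψ t)) x
        = Complex.I * (β : ℂ) * deriv (fun y => ((‖ψ t y‖ ^ 2 : ℝ) : ℂ) * ψ t y) x)
    (t x : ℝ) :
    HasDerivAt (fun s => gaugeMap α (ψ s) x)
      (Complex.I * (α : ℂ)
          * (((GG β (Function.uncurry ψ) (t, x) : ℝ) : ℂ) - ((AVG β ψ t : ℝ) : ℂ))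
          * Complex.exp (Complex.I * (α : ℂ) * (gaugePrim (ψ t) x : ℂ)) * ψ t x
        + Complex.exp (Complex.I * (α : ℂ) * (gaugePrim (ψ t) x : ℂ))
            * pd1 (Function.uncurry ψ) (t, x)) t := by
  have hprim : HasDerivAt (fun s => ((gaugePrim (ψ s) x : ℝ) : ℂ))
      (((GG β (Function.uncurry ψ) (t, x)
        - (1 / (2 * Real.pi)) * ∫ θ in (0:ℝ)..(2 * Real.pi), GG β (Function.uncurry ψ) (t, θ)
        : ℝ) : ℂ)) t := (hasDerivAt_prim_t hsmooth hper hDNLS t x).ofReal_comp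
  have hexp := (hprim.const_mul (Complex.I * (α : ℂ))).cexp
  have key := hexp.mul (hasDerivAt_pd1 hsmooth t x)
  convert key using 1
  · rfl
  · rfl
  simp only [Function.uncurry_apply_pair, AVG]
  push_cast
  ring

/-- FTC for `QX` -/
theorem integral_QX (hsmooth : ContDiff ℝ (⊤ : ℕ∞) (Function.uncurry ψ)) (s a b : ℝ) :
    ∫ y in a..b, QX (Function.uncurry ψ) (s, y)
      = Q (Function.uncurry ψ) (s, b) - Q (Function.uncurry ψ) (s, a) :=
  intervalIntegral.integral_eq_sub_of_hasDerivAt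
    (fun y _ => hasDerivAt_Q_snd hsmooth s y)
    (((continuous_QX hsmooth).comp (Continuous.prodMk_right s)).intervalIntegrable a b)

theorem Q_periodic (hper : ∀ t : ℝ, Function.Periodic (ψ t) (2 * Real.pi)) (s y : ℝ) :
    Q (Function.uncurry ψ) (s, y + 2 * Real.pi) = Q (Function.uncurry ψ) (s, y) := by
  unfold Q
  rw [psi_periodic_pt hper]

/-- `Ux * conj U` in terms of `QX` and the imaginary part -/
theorem UxcU (ψ : ℝ → ℝ → ℂ) (s y : ℝ) :
    pd2 (Function.uncurry ψ) (s, y) * (starRingEnd ℂ) (ψ s y)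
      = ((QX (Function.uncurry ψ) (s, y) / 2 : ℝ) : ℂ)
        + (((ψ s y).re * (pd2 (Function.uncurry ψ) (s, y)).im
            - (ψ s y).im * (pd2 (Function.uncurry ψ) (s, y)).re : ℝ) : ℂ) * Complex.I := by
  apply Complex.ext <;>
    simp [QX, Complex.mul_re, Complex.mul_im, Complex.add_re, Complex.add_im,
      Function.uncurry] <;> ring

theorem Gamma_eq (hsmooth : ContDiff ℝ (⊤ : ℕ∞) (Function.uncurry ψ))
    (hper : ∀ t : ℝ, Function.Periodic (ψ t) (2 * Real.pi)) (t : ℝ) :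
    GammaF α β (gaugeMap α (ψ t))
      = ((α ^ 2 * (massOf (ψ t)) ^ 2 : ℝ) : ℂ) + (α : ℂ) * ((AVG β ψ t : ℝ) : ℂ) := by
  classical
  set u := Function.uncurry ψ with hu
  have hcψ : Continuous (ψ t) := by
    have : Continuous fun y => u (t, y) := hsmooth.continuous.comp (Continuous.prodMk_right t)
    exact this
  have hcpd2 : Continuous fun y => pd2 u (t, y) :=
    (contDiff_pd2 hsmooth).continuous.comp (Continuous.prodMk_right t)
  have hcQ : Continuous fun y => Q u (t, y) :=
    (continuous_Q hsmooth).comp (Continuous.prodMk_right t)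
  have hcQX : Continuous fun y => QX u (t, y) :=
    (continuous_QX hsmooth).comp (Continuous.prodMk_right t)
  set fT : ℝ → ℝ := fun y => (Q u (t, y) - massOf (ψ t)) * Q u (t, y) with hfT
  set fR : ℝ → ℝ := fun y =>
    (ψ t y).re * (pd2 u (t, y)).im - (ψ t y).im * (pd2 u (t, y)).re with hfR
  have hcfT : Continuous fT := (hcQ.sub continuous_const).mul hcQ
  have hcfR : Continuous fR :=
    ((Complex.continuous_re.comp hcψ).mul (Complex.continuous_im.comp hcpd2)).sub
      ((Complex.continuous_im.comp hcψ).mul (Complex.continuous_re.comp hcpd2))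
  -- pointwise formula for `φ' ⋅ conj φ`
  have hptw : ∀ y : ℝ, deriv (gaugeMap α (ψ t)) y * (starRingEnd ℂ) (gaugeMap α (ψ t) y)
      = Complex.I * (α : ℂ) * ((fT y : ℝ) : ℂ) + ((QX u (t, y) / 2 : ℝ) : ℂ)
        + ((fR y : ℝ) : ℂ) * Complex.I := by
    intro y
    rw [(hasDerivAt_gauge_x hsmooth t y).deriv]
    have hcg : (starRingEnd ℂ) (gaugeMap α (ψ t) y)
        = (starRingEnd ℂ) (Complex.exp (Complex.I * (α : ℂ) * (gaugePrim (ψ t) y : ℂ)))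
          * (starRingEnd ℂ) (ψ t y) := by
      unfold gaugeMap; exact map_mul _ _ _
    rw [hcg]
    have hee := conj_exp_gauge α (gaugePrim (ψ t) y)
    calc Complex.exp (Complex.I * (α : ℂ) * (gaugePrim (ψ t) y : ℂ))
          * (Complex.I * (α : ℂ) * (((Q u (t, y) : ℝ) : ℂ) - ((massOf (ψ t) : ℝ) : ℂ)) * ψ t y
            + pd2 u (t, y))
          * ((starRingEnd ℂ) (Complex.exp (Complex.I * (α : ℂ) * (gaugePrim (ψ t) y : ℂ)))
            * (starRingEnd ℂ) (ψ t y))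
        = (Complex.exp (Complex.I * (α : ℂ) * (gaugePrim (ψ t) y : ℂ))
            * (starRingEnd ℂ) (Complex.exp (Complex.I * (α : ℂ) * (gaugePrim (ψ t) y : ℂ))))
          * ((Complex.I * (α : ℂ) * (((Q u (t, y) : ℝ) : ℂ) - ((massOf (ψ t) : ℝ) : ℂ))
              * (ψ t y * (starRingEnd ℂ) (ψ t y)))
            + pd2 u (t, y) * (starRingEnd ℂ) (ψ t y)) := by ring
      _ = Complex.I * (α : ℂ) * ((fT y : ℝ) : ℂ) + ((QX u (t, y) / 2 : ℝ) : ℂ)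
            + ((fR y : ℝ) : ℂ) * Complex.I := by
          rw [hee, Qc ψ t y, UxcU ψ t y, one_mul]
          simp only [hfT, hfR]
          push_cast
          ring
  -- the complex integral
  have i1 : IntervalIntegrable (fun y => Complex.I * (α : ℂ) * ((fT y : ℝ) : ℂ))
      MeasureTheory.volume 0 (2 * Real.pi) :=
    (continuous_const.mul (Complex.continuous_ofReal.comp hcfT)).intervalIntegrable _ _
  have i2 : IntervalIntegrable (fun y => ((QX u (t, y) / 2 : ℝ) : ℂ))
      MeasureTheory.volume 0 (2 * Real.pi) :=
    (Complex.continuous_ofReal.comp (hcQX.div_const 2)).intervalIntegrable _ _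
  have i3 : IntervalIntegrable (fun y => ((fR y : ℝ) : ℂ) * Complex.I)
      MeasureTheory.volume 0 (2 * Real.pi) :=
    ((Complex.continuous_ofReal.comp hcfR).mul continuous_const).intervalIntegrable _ _
  have hJ : (∫ y in (0:ℝ)..(2 * Real.pi),
        deriv (gaugeMap α (ψ t)) y * (starRingEnd ℂ) (gaugeMap α (ψ t) y))
      = Complex.I * (α : ℂ) * ((∫ y in (0:ℝ)..(2 * Real.pi), fT y : ℝ) : ℂ)
        + ((∫ y in (0:ℝ)..(2 * Real.pi), fR y : ℝ) : ℂ) * Complex.I := by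
    rw [intervalIntegral.integral_congr (fun y _ => hptw y)]
    rw [intervalIntegral.integral_add (i1.add i2) i3,
      intervalIntegral.integral_add i1 i2,
      intervalIntegral.integral_const_mul, intervalIntegral.integral_mul_const]
    rw [integral_ofReal, integral_ofReal, integral_ofReal]
    have hQX0 : (∫ y in (0:ℝ)..(2 * Real.pi), QX u (t, y) / 2) = 0 := by
      rw [intervalIntegral.integral_div, integral_QX hsmooth]
      have := Q_periodic hper t 0
      rw [zero_add] at this
      rw [this, sub_self, zero_div]
    rw [hQX0]
    push_cast
    ring
  -- norms of gaugeMap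
  have hL4 : (∫ y in (0:ℝ)..(2 * Real.pi), ‖gaugeMap α (ψ t) y‖ ^ 4)
      = ∫ y in (0:ℝ)..(2 * Real.pi), (Q u (t, y)) ^ 2 := by
    refine intervalIntegral.integral_congr fun y _ => ?_
    rw [norm_gaugeMap, Q_eq_norm]
    simp only [hu, Function.uncurry_apply_pair]
    ring
  -- real identities
  have hMM : MM ψ t = 2 * Real.pi * massOf (ψ t) := by
    rw [massOf_eq ψ t]
    field_simp
  have hT : (∫ y in (0:ℝ)..(2 * Real.pi), fT y)
      = (∫ y in (0:ℝ)..(2 * Real.pi), (Q u (t, y)) ^ 2)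
        - 2 * Real.pi * (massOf (ψ t)) ^ 2 := by
    have : ∀ y : ℝ, fT y = (Q u (t, y)) ^ 2 - massOf (ψ t) * Q u (t, y) := by
      intro y; simp only [hfT]; ring
    rw [intervalIntegral.integral_congr (fun y _ => this y)]
    rw [intervalIntegral.integral_sub (f := fun y => Q u (t, y) ^ 2)
      (g := fun y => massOf (ψ t) * Q u (t, y)) ((hcQ.pow 2).intervalIntegrable _ _)
      ((continuous_const.mul hcQ).intervalIntegrable _ _)]
    rw [intervalIntegral.integral_const_mul]
    have : (∫ y in (0:ℝ)..(2 * Real.pi), Q u (t, y)) = MM ψ t := rfl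
    rw [this, hMM]
    ring
  have havg : 2 * Real.pi * AVG β ψ t
      = 3 * β / 2 * (∫ y in (0:ℝ)..(2 * Real.pi), (Q u (t, y)) ^ 2)
        - 2 * (∫ y in (0:ℝ)..(2 * Real.pi), fR y) := by
    unfold AVG
    have hGG : ∀ θ : ℝ, GG β u (t, θ) = 3 * β / 2 * (Q u (t, θ)) ^ 2 - 2 * fR θ := by
      intro θ
      simp only [GG, hfR, hu, Function.uncurry_apply_pair]
    rw [intervalIntegral.integral_congr (fun θ _ => hGG θ)]
    rw [intervalIntegral.integral_sub (f := fun x => 3 * β / 2 * Q u (t, x) ^ 2)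
      (g := fun x => 2 * fR x)
      ((continuous_const.mul (hcQ.pow 2)).intervalIntegrable _ _)
      ((continuous_const.mul hcfR).intervalIntegrable _ _),
      intervalIntegral.integral_const_mul, intervalIntegral.integral_const_mul]
    have hpi : Real.pi ≠ 0 := Real.pi_ne_zero
    field_simp
  -- assemble
  unfold GammaF
  rw [hL4, mass_gaugeMap, hJ]
  have hTc : ((∫ y in (0:ℝ)..(2 * Real.pi), fT y : ℝ) : ℂ)
      = ((∫ y in (0:ℝ)..(2 * Real.pi), (Q u (t, y)) ^ 2 : ℝ) : ℂ)
        - 2 * (Real.pi : ℂ) * ((massOf (ψ t) : ℝ) : ℂ) ^ 2 := by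
    exact_mod_cast congrArg (fun r : ℝ => (r : ℂ)) hT
  have havgc : 2 * (Real.pi : ℂ) * ((AVG β ψ t : ℝ) : ℂ)
      = 3 * (β : ℂ) / 2 * ((∫ y in (0:ℝ)..(2 * Real.pi), (Q u (t, y)) ^ 2 : ℝ) : ℂ)
        - 2 * ((∫ y in (0:ℝ)..(2 * Real.pi), fR y : ℝ) : ℂ) := by
    exact_mod_cast congrArg (fun r : ℝ => (r : ℂ)) havg
  have hπ : (Real.pi : ℂ) ≠ 0 := Complex.ofReal_ne_zero.mpr Real.pi_ne_zero
  have hinv : (Real.pi : ℂ) * (Real.pi : ℂ)⁻¹ = 1 := mul_inv_cancel₀ hπ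
  push_cast
  push_cast at hTc havgc
  linear_combination
    ((α : ℂ) * ((AVG β ψ t : ℝ) : ℂ)
      + 2 * (α : ℂ) ^ 2 * ((massOf (ψ t) : ℝ) : ℂ) ^ 2) * hinv +
    (((α : ℂ) * ((α : ℂ) * ((∫ y in (0:ℝ)..(2 * Real.pi), fT y : ℝ) : ℂ)
        + ((∫ y in (0:ℝ)..(2 * Real.pi), fR y : ℝ) : ℂ))) / (Real.pi : ℂ)) * Complex.I_mul_I
    + (-(α : ℂ) ^ 2 / (Real.pi : ℂ)) * hTc
    + (-(α : ℂ) / (2 * (Real.pi : ℂ))) * havgc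


theorem stmt17_main (hsmooth : ContDiff ℝ (⊤ : ℕ∞) (Function.uncurry ψ))
    (hper : ∀ t : ℝ, Function.Periodic (ψ t) (2 * Real.pi))
    (hDNLS : ∀ t x : ℝ,
      Complex.I * deriv (fun s => ψ s x) t + deriv (deriv (ψ t)) x
        = Complex.I * (β : ℂ) * deriv (fun y => ((‖ψ t y‖ ^ 2 : ℝ) : ℂ) * ψ t y) x) :
    ∀ t x : ℝ,
      Complex.I * deriv (fun s => gaugeMap α (ψ s) x) t
          + deriv (deriv (gaugeMap α (ψ t))) x
          + 2 * Complex.I * (α : ℂ) * ((massOf (gaugeMap α (ψ t)) : ℝ) : ℂ)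
              * deriv (gaugeMap α (ψ t)) x
        = Complex.I * ((2 * (α + β) : ℝ) : ℂ) * ((‖gaugeMap α (ψ t) x‖ ^ 2 : ℝ) : ℂ)
              * deriv (gaugeMap α (ψ t)) x
          + Complex.I * ((2 * α + β : ℝ) : ℂ) * (gaugeMap α (ψ t) x) ^ 2
              * (starRingEnd ℂ) (deriv (gaugeMap α (ψ t)) x)
          + ((-α ^ 2 - α * β / 2 : ℝ) : ℂ) * ((‖gaugeMap α (ψ t) x‖ ^ 4 : ℝ) : ℂ)
              * gaugeMap α (ψ t) x
          + ((-(α * β) : ℝ) : ℂ) * ((massOf (gaugeMap α (ψ t)) : ℝ) : ℂ)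
              * ((‖gaugeMap α (ψ t) x‖ ^ 2 : ℝ) : ℂ) * gaugeMap α (ψ t) x
          + GammaF α β (gaugeMap α (ψ t)) * gaugeMap α (ψ t) x := by
  intro t x
  have hgm : gaugeMap α (ψ t) x
      = Complex.exp (Complex.I * (α : ℂ) * (gaugePrim (ψ t) x : ℂ)) * ψ t x := rfl
  have h2c : ((‖gaugeMap α (ψ t) x‖ ^ 2 : ℝ) : ℂ)
      = ((Q (Function.uncurry ψ) (t, x) : ℝ) : ℂ) := by
    rw [norm_gaugeMap]
    have hq : ‖ψ t x‖ ^ 2 = Q (Function.uncurry ψ) (t, x) := (Q_eq_norm (Function.uncurry ψ) (t, x)).symm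
    rw [hq]
  have h4c : ((‖gaugeMap α (ψ t) x‖ ^ 4 : ℝ) : ℂ)
      = ((Q (Function.uncurry ψ) (t, x) : ℝ) : ℂ) ^ 2 := by
    rw [norm_gaugeMap]
    have hq : ‖ψ t x‖ ^ 4 = (Q (Function.uncurry ψ) (t, x)) ^ 2 := by
      have hh : Q (Function.uncurry ψ) (t, x) = ‖ψ t x‖ ^ 2 := Q_eq_norm (Function.uncurry ψ) (t, x)
      rw [hh]; ring
    rw [hq]
    push_cast
    ring
  rw [(hasDerivAt_gauge_t hsmooth hper hDNLS t x).deriv,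
    deriv2_gauge_x hsmooth t x,
    (hasDerivAt_gauge_x hsmooth t x).deriv,
    mass_gaugeMap α (ψ t),
    Gamma_eq hsmooth hper t,
    h2c, h4c, hgm]
  have hconj : (starRingEnd ℂ)
      (Complex.exp (Complex.I * (α : ℂ) * (gaugePrim (ψ t) x : ℂ))
        * (Complex.I * (α : ℂ)
            * (((Q (Function.uncurry ψ) (t, x) : ℝ) : ℂ) - ((massOf (ψ t) : ℝ) : ℂ))
            * ψ t x + pd2 (Function.uncurry ψ) (t, x)))
      = (starRingEnd ℂ) (Complex.exp (Complex.I * (α : ℂ) * (gaugePrim (ψ t) x : ℂ)))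
        * (-(Complex.I * (α : ℂ)
              * (((Q (Function.uncurry ψ) (t, x) : ℝ) : ℂ) - ((massOf (ψ t) : ℝ) : ℂ))
              * (starRingEnd ℂ) (ψ t x))
          + (starRingEnd ℂ) (pd2 (Function.uncurry ψ) (t, x))) := by
    simp only [map_mul, map_add, map_sub, Complex.conj_I, Complex.conj_ofReal]
    ring
  rw [hconj]
  push_cast
  linear_combination final_algebra (α : ℂ) (β : ℂ)
    (Complex.exp (Complex.I * (α : ℂ) * (gaugePrim (ψ t) x : ℂ)))
    ((starRingEnd ℂ) (Complex.exp (Complex.I * (α : ℂ) * (gaugePrim (ψ t) x : ℂ))))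
    (ψ t x) ((starRingEnd ℂ) (ψ t x))
    (pd2 (Function.uncurry ψ) (t, x)) ((starRingEnd ℂ) (pd2 (Function.uncurry ψ) (t, x)))
    (pd2 (pd2 (Function.uncurry ψ)) (t, x)) (pd1 (Function.uncurry ψ) (t, x))
    ((Q (Function.uncurry ψ) (t, x) : ℝ) : ℂ) ((QX (Function.uncurry ψ) (t, x) : ℝ) : ℂ)
    ((massOf (ψ t) : ℝ) : ℂ) ((GG β (Function.uncurry ψ) (t, x) : ℝ) : ℂ)
    ((AVG β ψ t : ℝ) : ℂ)
    (conj_exp_gauge α (gaugePrim (ψ t) x))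
    (Qc ψ t x).symm (QXc ψ t x) (GGc β ψ t x) (hE_pd hsmooth hDNLS t x)

end part6

end Stmt17Aux

/-- if `ψ` solves DNLS `i∂_tψ + ψ'' = iβ(|ψ|²ψ)'` then `φ = 𝒢_α ψ` solves
the gauged DNLS equation
`i∂_tφ + φ'' + 2iαμφ' = ic₁|φ|²φ' + ic₂φ²φ̄' + c₃|φ|⁴φ + c₄μ|φ|²φ + Γ[φ]φ`,
with `c₁ = 2(α+β)`, `c₂ = 2α+β`, `c₃ = -α²-αβ/2`, `c₄ = -αβ`. -/
theorem stmt17 (α β : ℝ) (ψ : ℝ → ℝ → ℂ)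
    (hsmooth : ContDiff ℝ (⊤ : ℕ∞) (Function.uncurry ψ))
    (hper : ∀ t : ℝ, Function.Periodic (ψ t) (2 * Real.pi))
    (hDNLS : ∀ t x : ℝ,
      Complex.I * deriv (fun s => ψ s x) t + deriv (deriv (ψ t)) x
        = Complex.I * (β : ℂ) * deriv (fun y => ((‖ψ t y‖ ^ 2 : ℝ) : ℂ) * ψ t y) x) :
    ∀ t x : ℝ,
      Complex.I * deriv (fun s => gaugeMap α (ψ s) x) t
          + deriv (deriv (gaugeMap α (ψ t))) x
          + 2 * Complex.I * (α : ℂ) * ((massOf (gaugeMap α (ψ t)) : ℝ) : ℂ)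
              * deriv (gaugeMap α (ψ t)) x
        = Complex.I * ((2 * (α + β) : ℝ) : ℂ) * ((‖gaugeMap α (ψ t) x‖ ^ 2 : ℝ) : ℂ)
              * deriv (gaugeMap α (ψ t)) x
          + Complex.I * ((2 * α + β : ℝ) : ℂ) * (gaugeMap α (ψ t) x) ^ 2
              * (starRingEnd ℂ) (deriv (gaugeMap α (ψ t)) x)
          + ((-α ^ 2 - α * β / 2 : ℝ) : ℂ) * ((‖gaugeMap α (ψ t) x‖ ^ 4 : ℝ) : ℂ)
              * gaugeMap α (ψ t) x
          + ((-(α * β) : ℝ) : ℂ) * ((massOf (gaugeMap α (ψ t)) : ℝ) : ℂ)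
              * ((‖gaugeMap α (ψ t) x‖ ^ 2 : ℝ) : ℂ) * gaugeMap α (ψ t) x
          + GammaF α β (gaugeMap α (ψ t)) * gaugeMap α (ψ t) x :=
  Stmt17Aux.stmt17_main hsmooth hper hDNLS
end
end

section
/- The truncated gauged DNLS flow on E_N preserves the Lebesgue measure on ℂ^{2N+1}: the vector field F_n(f) = i f''(n) - 2αμ[f] f'(n) + c₁(P_N(|f|²f'))(n) + c₂(P_N(f²f̄'))(n) - ic₃(P_N(|f|⁴f))(n) - ic₄ μ[f](P_N(|f|²f))(n) - i(Γ[f] f)(n), viewed as a function of the Fourier coefficients (f(n))_{|n|≤N}, has vanishing divergence: Σ_{|n|≤N} (∂F_n/∂f(n) + ∂F̄_n/∂f̄(n)) = 0. -/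
/-!
Write `f = ∑ c(m) e^{imx}` and compute in the commutative algebra of bounded continuous functions
`ℝ →ᵇ ℂ`. There the Wirtinger derivative `∂/∂c(n)` is a derivation with `∂f = e^{inx}`,
`∂f' = in e^{inx}` and `∂f̄ = ∂f̄' = 0`, so the diagonal derivative of the `n`-th Fourier coefficient
of a monomial in `f, f', f̄, f̄'` is the mean of a monomial of lower degree. Summing over `n`
(Parseval), each of the seven terms of the field contributes a purely imaginary amount to
`∑ₙ ∂Fₙ/∂c(n)`: the only quantities that appear are the mass and `∫ |f|⁴`, which are real, and
`∫ f' f̄ = 2πi ∑ n |c(n)|²`, which is imaginary. The divergence is twice the real part of that sum.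
-/

open MeasureTheory intervalIntegral

noncomputable section

/-- Index set of Fourier modes `|n| ≤ N`. -/
abbrev Idx (N : ℕ) := {n : ℤ // n ∈ Finset.Icc (-(N:ℤ)) (N:ℤ)}

/-- Extension of a coefficient vector by zero. -/
def extCoeff (N : ℕ) (c : Idx N → ℂ) : ℤ → ℂ :=
  fun n => if h : n ∈ Finset.Icc (-(N:ℤ)) (N:ℤ) then c ⟨n, h⟩ else 0

/-- The trigonometric polynomial with Fourier coefficients `c`. -/
def toFun (N : ℕ) (c : Idx N → ℂ) : ℝ → ℂ :=
  fun x => ∑ n : Idx N, c n * Complex.exp (Complex.I * ((n : ℤ) : ℂ) * (x : ℂ))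

/-- Wirtinger derivative `∂G/∂c(n)` at `c`, via the real Fréchet derivative. -/
def partialZ {N : ℕ} (G : (Idx N → ℂ) → ℂ) (c : Idx N → ℂ) (n : Idx N) : ℂ :=
  (fderiv ℝ G c (Pi.single n 1) - Complex.I * fderiv ℝ G c (Pi.single n Complex.I)) / 2

/-- Divergence `Σ_{|n|≤N} (∂F_n/∂f(n) + ∂F̄_n/∂f̄(n))`, using `∂F̄_n/∂f̄(n) = conj (∂F_n/∂f(n))`. -/
def cdiv {N : ℕ} (F : Idx N → (Idx N → ℂ) → ℂ) (c : Idx N → ℂ) : ℂ :=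
  ∑ n : Idx N, (partialZ (F n) c n + (starRingEnd ℂ) (partialZ (F n) c n))

/-- The coefficient vector field `F_n(f) = i (P_N(I[P_N f] · P_N f))(n)`. -/
def gaugeField (N : ℕ) (n : Idx N) (c : Idx N → ℂ) : ℂ :=
  Complex.I * fCoeff (fun x => ((gaugePrim (toFun N c) x : ℝ) : ℂ) * toFun N c x) (n : ℤ)

/-- Squared `H¹` norm of a coefficient vector: `Σ (1+n²)|f(n)|²`. -/
def h1normSq (N : ℕ) (c : Idx N → ℂ) : ℝ :=
  ∑ n : Idx N, (1 + ((n : ℤ) : ℝ) ^ 2) * ‖c n‖ ^ 2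

/-- The truncated gauged DNLS vector field in Fourier coordinates, with
`c₁ = 2(α+β)`, `c₂ = 2α+β`, `c₃ = -α²-αβ/2`, `c₄ = -αβ`. -/
def gdnlsField (N : ℕ) (α β : ℝ) (n : Idx N) (c : Idx N → ℂ) : ℂ :=
  let f := toFun N c
  Complex.I * fCoeff (deriv (deriv f)) (n : ℤ)
    - ((2 * α * massOf f : ℝ) : ℂ) * fCoeff (deriv f) (n : ℤ)
    + ((2 * (α + β) : ℝ) : ℂ) * fCoeff (fun x => ((‖f x‖ ^ 2 : ℝ) : ℂ) * deriv f x) (n : ℤ)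
    + ((2 * α + β : ℝ) : ℂ) * fCoeff (fun x => (f x) ^ 2 * (starRingEnd ℂ) (deriv f x)) (n : ℤ)
    - Complex.I * ((-α ^ 2 - α * β / 2 : ℝ) : ℂ)
        * fCoeff (fun x => ((‖f x‖ ^ 4 : ℝ) : ℂ) * f x) (n : ℤ)
    - Complex.I * ((-(α * β) : ℝ) : ℂ) * ((massOf f : ℝ) : ℂ)
        * fCoeff (fun x => ((‖f x‖ ^ 2 : ℝ) : ℂ) * f x) (n : ℤ)
    - Complex.I * GammaF α β f * c n

open Complex ComplexConjugate
open scoped BoundedContinuousFunction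

section Wirtinger

variable {ι E F A : Type*} [DecidableEq ι]
  [NormedAddCommGroup E] [NormedSpace ℂ E] [NormedAddCommGroup F] [NormedSpace ℂ F]
  [NormedCommRing A] [NormedAlgebra ℂ A]

def HasWirtingerDerivAt (G : (ι → ℂ) → E) (d : E) (c : ι → ℂ) (n : ι) : Prop :=
  ∃ L : (ι → ℂ) →L[ℝ] E,
    HasFDerivAt G L c ∧ L (Pi.single n 1) - I • L (Pi.single n I) = (2 : ℂ) • d

variable {G H : (ι → ℂ) → E} {d e : E} {c : ι → ℂ} {n : ι}

theorem HasWirtingerDerivAt.partialZ_eq {N : ℕ} {G : (Idx N → ℂ) → ℂ} {d : ℂ} {c : Idx N → ℂ}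
    {n : Idx N} (h : HasWirtingerDerivAt G d c n) : partialZ G c n = d := by
  obtain ⟨L, hL, hd⟩ := h
  rw [partialZ, hL.fderiv]
  simp only [smul_eq_mul] at hd
  rw [hd]
  ring

theorem HasWirtingerDerivAt.congr_deriv {d' : E} (h : HasWirtingerDerivAt G d c n)
    (hd : d = d') : HasWirtingerDerivAt G d' c n := hd ▸ h

theorem hasWirtingerDerivAt_const (a : E) : HasWirtingerDerivAt (fun _ => a) 0 c n :=
  ⟨0, hasFDerivAt_const a c, by simp⟩

theorem ContinuousLinearMap.hasWirtingerDerivAt (T : (ι → ℂ) →L[ℂ] E) :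
    HasWirtingerDerivAt T (T (Pi.single n 1)) c n := by
  refine ⟨T.restrictScalars ℝ, (T.restrictScalars ℝ).hasFDerivAt, ?_⟩
  have hI : (Pi.single n I : ι → ℂ) = I • Pi.single n 1 := by
    rw [← Pi.single_smul, smul_eq_mul, mul_one]
  simp only [ContinuousLinearMap.coe_restrictScalars', hI, map_smul, smul_smul, I_mul_I]
  module

theorem hasWirtingerDerivAt_apply_self : HasWirtingerDerivAt (fun c : ι → ℂ => c n) 1 c n :=
  (ContinuousLinearMap.proj (R := ℂ) (φ := fun _ : ι => ℂ) n).hasWirtingerDerivAt.congr_deriv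
    (by simp)

theorem ContinuousLinearMap.hasWirtingerDerivAt_star [Fintype ι] [StarRing A] [StarModule ℂ A]
    [ContinuousStar A] (T : (ι → ℂ) →L[ℂ] A) :
    HasWirtingerDerivAt (fun c => star (T c)) 0 c n := by
  refine ⟨_, (T.restrictScalars ℝ).hasFDerivAt.star, ?_⟩
  have hI : (Pi.single n I : ι → ℂ) = I • Pi.single n 1 := by
    rw [← Pi.single_smul, smul_eq_mul, mul_one]
  simp only [ContinuousLinearMap.coe_comp, Function.comp_apply,
    ContinuousLinearMap.coe_restrictScalars', hI, map_smul, star_smul,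
    ContinuousLinearEquiv.coe_coe, starL'_apply, smul_zero]
  simp [smul_smul]

theorem HasWirtingerDerivAt.add [Fintype ι] (hG : HasWirtingerDerivAt G d c n)
    (hH : HasWirtingerDerivAt H e c n) : HasWirtingerDerivAt (fun c => G c + H c) (d + e) c n := by
  obtain ⟨L, hL, hd⟩ := hG
  obtain ⟨M, hM, he⟩ := hH
  refine ⟨L + M, hL.add hM, ?_⟩
  simp only [add_apply, smul_add]
  rw [← hd, ← he]
  module

theorem HasWirtingerDerivAt.sub [Fintype ι] (hG : HasWirtingerDerivAt G d c n)
    (hH : HasWirtingerDerivAt H e c n) : HasWirtingerDerivAt (fun c => G c - H c) (d - e) c n := by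
  obtain ⟨L, hL, hd⟩ := hG
  obtain ⟨M, hM, he⟩ := hH
  refine ⟨L - M, hL.sub hM, ?_⟩
  simp only [sub_apply, smul_sub]
  rw [← hd, ← he]
  module

theorem HasWirtingerDerivAt.clm_comp [Fintype ι] (T : E →L[ℂ] F)
    (hG : HasWirtingerDerivAt G d c n) : HasWirtingerDerivAt (fun c => T (G c)) (T d) c n := by
  obtain ⟨L, hL, hd⟩ := hG
  refine ⟨(T.restrictScalars ℝ).comp L, (T.restrictScalars ℝ).hasFDerivAt.comp c hL, ?_⟩
  simp only [ContinuousLinearMap.coe_comp, Function.comp_apply,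
    ContinuousLinearMap.coe_restrictScalars']
  rw [← map_smul, ← map_sub, hd, map_smul]

theorem HasWirtingerDerivAt.mul [Fintype ι] {G H : (ι → ℂ) → A} {d e : A}
    (hG : HasWirtingerDerivAt G d c n) (hH : HasWirtingerDerivAt H e c n) :
    HasWirtingerDerivAt (fun c => G c * H c) (d * H c + G c * e) c n := by
  obtain ⟨L, hL, hd⟩ := hG
  obtain ⟨M, hM, he⟩ := hH
  refine ⟨_, hL.mul hM, ?_⟩
  simp only [add_apply, smul_apply, smul_eq_mul]
  have key : G c * M (Pi.single n 1) + H c * L (Pi.single n 1)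
      - I • (G c * M (Pi.single n I) + H c * L (Pi.single n I))
      = G c * (M (Pi.single n 1) - I • M (Pi.single n I))
        + H c * (L (Pi.single n 1) - I • L (Pi.single n I)) := by
    simp only [smul_add, mul_smul_comm, mul_sub]
    abel
  rw [key, hd, he, mul_smul_comm, mul_smul_comm, ← smul_add]
  congr 1
  ring

theorem HasWirtingerDerivAt.const_mul [Fintype ι] {G : (ι → ℂ) → A} {d : A} (a : A)
    (h : HasWirtingerDerivAt G d c n) : HasWirtingerDerivAt (fun c => a * G c) (a * d) c n :=
  ((hasWirtingerDerivAt_const a).mul h).congr_deriv (by ring)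

end Wirtinger

section TrigPoly

open Real

def fourierBCF (k : ℤ) : ℝ →ᵇ ℂ :=
  .ofNormedAddCommGroup (fun x => cexp (I * k * x)) (by fun_prop) 1 fun x => by
    rw [show I * k * x = ((k * x : ℝ) : ℂ) * I by push_cast; ring, norm_exp_ofReal_mul_I]

theorem fourierBCF_apply (k : ℤ) (x : ℝ) : fourierBCF k x = cexp (I * k * x) := rfl

theorem fourierBCF_add (j k : ℤ) : fourierBCF (j + k) = fourierBCF j * fourierBCF k := by
  ext x
  simp only [fourierBCF_apply, BoundedContinuousFunction.coe_mul, Pi.mul_apply, ← Complex.exp_add]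
  push_cast
  ring_nf

theorem fourierBCF_mul_fourierBCF_neg (k : ℤ) : fourierBCF k * fourierBCF (-k) = 1 := by
  rw [← fourierBCF_add, add_neg_cancel]
  ext x
  simp [fourierBCF_apply]

theorem star_fourierBCF (k : ℤ) : star (fourierBCF k) = fourierBCF (-k) := by
  ext x
  rw [BoundedContinuousFunction.star_apply, fourierBCF_apply, fourierBCF_apply, star_def,
    ← exp_conj]
  simp

def circleMean : (ℝ →ᵇ ℂ) →L[ℂ] ℂ :=
  LinearMap.mkContinuous
    { toFun := fun g => 1 / (2 * π) * ∫ x in (0 : ℝ)..(2 * π), g x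
      map_add' := fun g h => by
        simp only [BoundedContinuousFunction.coe_add, Pi.add_apply]
        rw [intervalIntegral.integral_add (g.continuous.intervalIntegrable _ _)
          (h.continuous.intervalIntegrable _ _), mul_add]
      map_smul' := fun a g => by
        simp only [BoundedContinuousFunction.coe_smul, smul_eq_mul, RingHom.id_apply,
          intervalIntegral.integral_const_mul]
        ring }
    1 fun g => by
      have hb := intervalIntegral.norm_integral_le_of_norm_le_const (a := 0) (b := 2 * π)
        fun x _ => g.norm_coe_le_norm x
      simp only [LinearMap.coe_mk, AddHom.coe_mk, norm_mul, norm_div, norm_one,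
        RCLike.norm_ofNat, norm_real, Real.norm_eq_abs, abs_of_pos pi_pos, sub_zero,
        abs_of_pos two_pi_pos] at hb ⊢
      calc 1 / (2 * π) * ‖∫ x in (0 : ℝ)..(2 * π), g x‖
          ≤ 1 / (2 * π) * (‖g‖ * (2 * π)) := by gcongr
        _ = 1 * ‖g‖ := by field_simp

theorem circleMean_apply (g : ℝ →ᵇ ℂ) :
    circleMean g = 1 / (2 * π) * ∫ x in (0 : ℝ)..(2 * π), g x := rfl

theorem circleMean_star (g : ℝ →ᵇ ℂ) : circleMean (star g) = conj (circleMean g) := by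
  simp only [circleMean_apply, BoundedContinuousFunction.star_apply, map_mul,
    ← intervalIntegral.intervalIntegral_conj]
  simp [map_ofNat]

theorem circleMean_fourierBCF (k : ℤ) :
    circleMean (fourierBCF k) = if k = 0 then 1 else 0 := by
  rw [circleMean_apply]
  split_ifs with hk
  · subst hk
    simp only [fourierBCF_apply, Int.cast_zero, mul_zero, zero_mul, Complex.exp_zero,
      intervalIntegral.integral_const, sub_zero, real_smul, ofReal_mul, ofReal_ofNat, mul_one]
    field_simp
  · have hc : I * k ≠ 0 := mul_ne_zero I_ne_zero (by exact_mod_cast hk)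
    simp only [fourierBCF_apply]
    rw [integral_exp_mul_complex hc]
    have h1 : cexp (I * k * (2 * π)) = 1 := by
      rw [← exp_int_mul_two_pi_mul_I k]
      ring_nf
    simp [h1]

theorem circleMean_algebraMap (a : ℂ) : circleMean (algebraMap ℂ (ℝ →ᵇ ℂ) a) = a := by
  rw [Algebra.algebraMap_eq_smul_one, map_smul, ← fourierBCF_mul_fourierBCF_neg 0,
    ← fourierBCF_add, circleMean_fourierBCF, if_pos (add_neg_cancel 0), smul_eq_mul, mul_one]

theorem circleMean_algebraMap_mul (a : ℂ) (g : ℝ →ᵇ ℂ) :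
    circleMean (algebraMap ℂ (ℝ →ᵇ ℂ) a * g) = a * circleMean g := by
  rw [← Algebra.smul_def, map_smul, smul_eq_mul]

theorem fCoeff_eq_circleMean {φ : ℝ → ℂ} {g : ℝ →ᵇ ℂ} (hg : ∀ x, φ x = g x) (n : ℤ) :
    fCoeff φ n = circleMean (g * fourierBCF (-n)) := by
  rw [fCoeff, circleMean_apply]
  congr 2 with x
  simp only [hg, BoundedContinuousFunction.coe_mul, Pi.mul_apply, fourierBCF_apply]
  push_cast
  ring_nf

/-- `trigPoly N j c` is the `j`-th derivative of `∑ₘ c(m) e^{imx}`. -/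
def trigPoly (N j : ℕ) : (Idx N → ℂ) →L[ℂ] ℝ →ᵇ ℂ :=
  LinearMap.toContinuousLinearMap
    (Fintype.linearCombination ℂ fun m : Idx N => (I * (m : ℤ)) ^ j • fourierBCF m)

variable {N : ℕ}

theorem trigPoly_apply (j : ℕ) (c : Idx N → ℂ) :
    trigPoly N j c = ∑ m, c m • (I * (m : ℤ)) ^ j • fourierBCF m :=
  Fintype.linearCombination_apply ..

theorem trigPoly_single (j : ℕ) (n : Idx N) :
    trigPoly N j (Pi.single n 1) = (I * (n : ℤ)) ^ j • fourierBCF n := by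
  rw [trigPoly, LinearMap.coe_toContinuousLinearMap', Fintype.linearCombination_apply_single,
    one_smul]

theorem toFun_eq_coe_trigPoly (c : Idx N → ℂ) : toFun N c = trigPoly N 0 c := by
  ext x
  simp [trigPoly_apply, toFun, fourierBCF_apply]

theorem hasDerivAt_trigPoly (j : ℕ) (c : Idx N → ℂ) (x : ℝ) :
    HasDerivAt (trigPoly N j c) (trigPoly N (j + 1) c x) x := by
  simp only [trigPoly_apply, BoundedContinuousFunction.coe_sum, BoundedContinuousFunction.coe_smul,
    Finset.sum_apply, fourierBCF_apply, smul_eq_mul]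
  refine HasDerivAt.sum fun m _ => ?_
  have h : HasDerivAt (fun y : ℝ => I * (m : ℤ) * (y : ℂ)) (I * (m : ℤ)) x := by
    simpa using (hasDerivAt_id (x : ℂ)).comp_ofReal.const_mul (I * ((m : ℤ) : ℂ))
  exact ((h.cexp.const_mul ((I * (m : ℤ)) ^ j)).const_mul (c m)).congr_deriv (by ring)

theorem deriv_trigPoly (j : ℕ) (c : Idx N → ℂ) :
    deriv (trigPoly N j c) = trigPoly N (j + 1) c :=
  funext fun x => (hasDerivAt_trigPoly j c x).deriv

theorem circleMean_trigPoly_mul_fourierBCF_neg (j : ℕ) (c : Idx N → ℂ) (n : Idx N) :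
    circleMean (trigPoly N j c * fourierBCF (-n)) = (I * (n : ℤ)) ^ j * c n := by
  simp only [trigPoly_apply, Finset.sum_mul, smul_mul_assoc, ← fourierBCF_add, map_sum, map_smul,
    circleMean_fourierBCF, smul_eq_mul, mul_ite, mul_one, mul_zero]
  rw [Finset.sum_eq_single n (fun m _ hm => if_neg fun h => hm (Subtype.ext (by omega)))
    (by simp), if_pos (add_neg_cancel _)]
  ring

theorem circleMean_star_trigPoly_mul_fourierBCF (c : Idx N → ℂ) (n : Idx N) :
    circleMean (star (trigPoly N 0 c) * fourierBCF n) = conj (c n) := by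
  rw [← neg_neg (n : ℤ), ← star_fourierBCF, ← star_mul, mul_comm, circleMean_star,
    circleMean_trigPoly_mul_fourierBCF_neg, pow_zero, one_mul]

theorem sum_mul_circleMean_mul_fourierBCF (j : ℕ) (c : Idx N → ℂ) (h : ℝ →ᵇ ℂ) :
    ∑ n : Idx N, (I * (n : ℤ)) ^ j * c n * circleMean (h * fourierBCF n)
      = circleMean (h * trigPoly N j c) := by
  simp only [trigPoly_apply, Finset.mul_sum, mul_smul_comm, map_sum, map_smul, smul_eq_mul]
  exact Finset.sum_congr rfl fun n _ => by ring

theorem sum_conj_mul_circleMean_mul_fourierBCF_neg (c : Idx N → ℂ) (h : ℝ →ᵇ ℂ) :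
    ∑ n, conj (c n) * circleMean (h * fourierBCF (-n))
      = circleMean (h * star (trigPoly N 0 c)) := by
  simp only [trigPoly_apply, pow_zero, one_smul, star_sum, star_smul, star_fourierBCF,
    Finset.mul_sum, mul_smul_comm, map_sum, map_smul, smul_eq_mul]
  rfl

variable {c : Idx N → ℂ}

theorem circleMean_mul_star_trigPoly :
    circleMean (trigPoly N 0 c * star (trigPoly N 0 c)) = (massOf (toFun N c) : ℂ) := by
  rw [massOf, circleMean_apply, ofReal_mul, ← intervalIntegral.integral_ofReal]
  simp [toFun_eq_coe_trigPoly, mul_conj']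

theorem circleMean_mul_star_trigPoly_sq :
    circleMean ((trigPoly N 0 c * star (trigPoly N 0 c)) ^ 2)
      = ((1 / (2 * π) * ∫ x in (0 : ℝ)..(2 * π), ‖toFun N c x‖ ^ 4 : ℝ) : ℂ) := by
  rw [circleMean_apply, ofReal_mul, ← intervalIntegral.integral_ofReal]
  simp [toFun_eq_coe_trigPoly, mul_conj', ← pow_mul]

theorem circleMean_star_trigPoly_mul_trigPoly_one :
    circleMean (star (trigPoly N 0 c) * trigPoly N 1 c)
      = I * ((∑ n : Idx N, ((n : ℤ) : ℝ) * normSq (c n) : ℝ) : ℂ) := by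
  rw [← sum_mul_circleMean_mul_fourierBCF]
  simp only [circleMean_star_trigPoly_mul_fourierBCF, pow_one, ofReal_sum, Finset.mul_sum,
    ofReal_mul, ofReal_intCast]
  refine Finset.sum_congr rfl fun n _ => ?_
  rw [normSq_eq_conj_mul_self]
  ring

end TrigPoly

section Divergence

variable {N : ℕ} {c : Idx N → ℂ} {n : Idx N}

theorem hasWirtingerDerivAt_trigPoly (j : ℕ) :
    HasWirtingerDerivAt (trigPoly N j)
      (fourierBCF n * algebraMap ℂ (ℝ →ᵇ ℂ) (I * (n : ℤ)) ^ j) c n :=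
  (trigPoly N j).hasWirtingerDerivAt.congr_deriv (by
    rw [trigPoly_single, Algebra.smul_def, mul_comm, map_pow])

theorem hasWirtingerDerivAt_trigPoly_zero :
    HasWirtingerDerivAt (trigPoly N 0) (fourierBCF n) c n :=
  (hasWirtingerDerivAt_trigPoly 0).congr_deriv (by simp)

theorem hasWirtingerDerivAt_star_trigPoly (j : ℕ) :
    HasWirtingerDerivAt (fun c => star (trigPoly N j c)) 0 c n :=
  (trigPoly N j).hasWirtingerDerivAt_star

theorem hasWirtingerDerivAt_mul_star_trigPoly :
    HasWirtingerDerivAt (fun c => trigPoly N 0 c * star (trigPoly N 0 c))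
      (fourierBCF n * star (trigPoly N 0 c)) c n :=
  (hasWirtingerDerivAt_trigPoly_zero.mul (hasWirtingerDerivAt_star_trigPoly 0)).congr_deriv
    (by rw [mul_zero, add_zero])

theorem hasWirtingerDerivAt_mass :
    HasWirtingerDerivAt (fun c => circleMean (trigPoly N 0 c * star (trigPoly N 0 c)))
      (conj (c n)) c n :=
  (hasWirtingerDerivAt_mul_star_trigPoly.clm_comp circleMean).congr_deriv (by
    rw [mul_comm, circleMean_star_trigPoly_mul_fourierBCF])

theorem HasWirtingerDerivAt.circleMean_mul_fourierBCF_neg {G : (Idx N → ℂ) → ℝ →ᵇ ℂ}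
    {d X : ℝ →ᵇ ℂ} (h : HasWirtingerDerivAt G d c n) (hX : d = fourierBCF n * X) :
    HasWirtingerDerivAt (fun c => circleMean (G c * fourierBCF (-n))) (circleMean X) c n :=
  ((h.mul (hasWirtingerDerivAt_const _)).clm_comp circleMean).congr_deriv (by
    rw [mul_zero, add_zero, hX, mul_right_comm, fourierBCF_mul_fourierBCF_neg, one_mul])

/-- Since `∂F̄ₙ/∂f̄(n) = conj (∂Fₙ/∂f(n))`, the divergence is `2 Re ∑ₙ ∂Fₙ/∂f(n)`. -/
def IsDivFreeAt (F : Idx N → (Idx N → ℂ) → ℂ) (c : Idx N → ℂ) : Prop :=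
  ∃ D : Idx N → ℂ, (∀ n, HasWirtingerDerivAt (F n) (D n) c n) ∧ (∑ n, D n).re = 0

variable {F G : Idx N → (Idx N → ℂ) → ℂ}

theorem IsDivFreeAt.cdiv_eq_zero (h : IsDivFreeAt F c) : cdiv F c = 0 := by
  obtain ⟨D, hD, hre⟩ := h
  simp only [cdiv, fun n => (hD n).partialZ_eq]
  rw [Finset.sum_add_distrib, ← map_sum, add_conj, hre, mul_zero, ofReal_zero]

theorem IsDivFreeAt.add (hF : IsDivFreeAt F c) (hG : IsDivFreeAt G c) :
    IsDivFreeAt (fun n c => F n c + G n c) c := by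
  obtain ⟨D, hD, hDre⟩ := hF
  obtain ⟨E, hE, hEre⟩ := hG
  exact ⟨_, fun n => (hD n).add (hE n), by
    rw [Finset.sum_add_distrib, add_re, hDre, hEre, add_zero]⟩

theorem IsDivFreeAt.sub (hF : IsDivFreeAt F c) (hG : IsDivFreeAt G c) :
    IsDivFreeAt (fun n c => F n c - G n c) c := by
  obtain ⟨D, hD, hDre⟩ := hF
  obtain ⟨E, hE, hEre⟩ := hG
  exact ⟨_, fun n => (hD n).sub (hE n), by
    rw [Finset.sum_sub_distrib, sub_re, hDre, hEre, sub_zero]⟩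

theorem IsDivFreeAt.ofReal_mul (r : ℝ) (hF : IsDivFreeAt F c) :
    IsDivFreeAt (fun n c => (r : ℂ) * F n c) c := by
  obtain ⟨D, hD, hDre⟩ := hF
  exact ⟨_, fun n => (hD n).const_mul _, by
    rw [← Finset.mul_sum, re_ofReal_mul, hDre, mul_zero]⟩

theorem isDivFreeAt_I_mul_coeff_deriv_deriv :
    IsDivFreeAt (fun n c => I * circleMean (trigPoly N 2 c * fourierBCF (-n))) c := by
  refine ⟨_, fun n => ((hasWirtingerDerivAt_trigPoly 2).circleMean_mul_fourierBCF_neg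
      (X := algebraMap ℂ (ℝ →ᵇ ℂ) ((I * (n : ℤ)) ^ 2)) (by rw [map_pow])).const_mul I, ?_⟩
  simp only [circleMean_algebraMap]
  simp [sq]

theorem isDivFreeAt_mass_mul_coeff_deriv :
    IsDivFreeAt (fun n c => circleMean (trigPoly N 0 c * star (trigPoly N 0 c))
      * circleMean (trigPoly N 1 c * fourierBCF (-n))) c := by
  refine ⟨_, fun n => hasWirtingerDerivAt_mass.mul
    ((hasWirtingerDerivAt_trigPoly 1).circleMean_mul_fourierBCF_neg
      (X := algebraMap ℂ (ℝ →ᵇ ℂ) (I * (n : ℤ))) (by ring)), ?_⟩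
  simp only [circleMean_algebraMap]
  rw [Finset.sum_add_distrib, sum_conj_mul_circleMean_mul_fourierBCF_neg, mul_comm,
    circleMean_star_trigPoly_mul_trigPoly_one, circleMean_mul_star_trigPoly]
  simp

theorem isDivFreeAt_coeff_normSq_mul_deriv :
    IsDivFreeAt (fun n c => circleMean
      (trigPoly N 0 c * star (trigPoly N 0 c) * trigPoly N 1 c * fourierBCF (-n))) c := by
  refine ⟨_, fun n => (hasWirtingerDerivAt_mul_star_trigPoly.mul
    (hasWirtingerDerivAt_trigPoly 1)).circleMean_mul_fourierBCF_neg
    (X := star (trigPoly N 0 c) * trigPoly N 1 c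
      + algebraMap ℂ (ℝ →ᵇ ℂ) (I * (n : ℤ)) * (trigPoly N 0 c * star (trigPoly N 0 c)))
    (by ring), ?_⟩
  simp only [map_add, circleMean_algebraMap_mul, circleMean_star_trigPoly_mul_trigPoly_one,
    circleMean_mul_star_trigPoly]
  simp

theorem isDivFreeAt_coeff_sq_mul_star_deriv :
    IsDivFreeAt (fun n c => circleMean
      (trigPoly N 0 c * trigPoly N 0 c * star (trigPoly N 1 c) * fourierBCF (-n))) c := by
  refine ⟨_, fun n => ((hasWirtingerDerivAt_trigPoly_zero.mul
    hasWirtingerDerivAt_trigPoly_zero).mul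
      (hasWirtingerDerivAt_star_trigPoly 1)).circleMean_mul_fourierBCF_neg
    (X := trigPoly N 0 c * star (trigPoly N 1 c) + trigPoly N 0 c * star (trigPoly N 1 c))
    (by ring), ?_⟩
  have hQ : circleMean (trigPoly N 0 c * star (trigPoly N 1 c))
      = conj (circleMean (star (trigPoly N 0 c) * trigPoly N 1 c)) := by
    rw [← circleMean_star, star_mul, star_star, mul_comm]
  simp [hQ, circleMean_star_trigPoly_mul_trigPoly_one]

theorem isDivFreeAt_I_mul_coeff_normSq_sq_mul :
    IsDivFreeAt (fun n c => I * circleMean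
      ((trigPoly N 0 c * star (trigPoly N 0 c)) ^ 2 * trigPoly N 0 c * fourierBCF (-n))) c := by
  simp only [sq]
  refine ⟨_, fun n => (((hasWirtingerDerivAt_mul_star_trigPoly.mul
    hasWirtingerDerivAt_mul_star_trigPoly).mul
      hasWirtingerDerivAt_trigPoly_zero).circleMean_mul_fourierBCF_neg
    (X := (trigPoly N 0 c * star (trigPoly N 0 c)) ^ 2
      + (trigPoly N 0 c * star (trigPoly N 0 c)) ^ 2
      + (trigPoly N 0 c * star (trigPoly N 0 c)) ^ 2) (by ring)).const_mul I, ?_⟩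
  simp [circleMean_mul_star_trigPoly_sq]

theorem isDivFreeAt_I_mul_mass_mul_coeff_normSq_mul :
    IsDivFreeAt (fun n c => I * (circleMean (trigPoly N 0 c * star (trigPoly N 0 c))
      * circleMean (trigPoly N 0 c * star (trigPoly N 0 c) * trigPoly N 0 c
        * fourierBCF (-n)))) c := by
  refine ⟨_, fun n => (hasWirtingerDerivAt_mass.mul ((hasWirtingerDerivAt_mul_star_trigPoly.mul
    hasWirtingerDerivAt_trigPoly_zero).circleMean_mul_fourierBCF_neg
      (X := trigPoly N 0 c * star (trigPoly N 0 c) + trigPoly N 0 c * star (trigPoly N 0 c))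
      (by ring))).const_mul I, ?_⟩
  rw [← Finset.mul_sum, Finset.sum_add_distrib, sum_conj_mul_circleMean_mul_fourierBCF_neg,
    show trigPoly N 0 c * star (trigPoly N 0 c) * trigPoly N 0 c * star (trigPoly N 0 c)
      = (trigPoly N 0 c * star (trigPoly N 0 c)) ^ 2 by ring]
  simp [circleMean_mul_star_trigPoly, circleMean_mul_star_trigPoly_sq]

theorem hasWirtingerDerivAt_gamma (a b r : ℝ) :
    HasWirtingerDerivAt (fun c => (a : ℂ)
        * circleMean ((trigPoly N 0 c * star (trigPoly N 0 c)) ^ 2)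
        - b * circleMean (trigPoly N 0 c * star (trigPoly N 0 c)) ^ 2
        + I * r * circleMean (star (trigPoly N 0 c) * trigPoly N 1 c))
      (a * circleMean ((trigPoly N 0 c * star (trigPoly N 0 c) * star (trigPoly N 0 c)
            + trigPoly N 0 c * star (trigPoly N 0 c) * star (trigPoly N 0 c)) * fourierBCF n)
        - b * (2 * circleMean (trigPoly N 0 c * star (trigPoly N 0 c))
          * circleMean (star (trigPoly N 0 c) * fourierBCF n))
        + I * r * (I * (n : ℤ) * circleMean (star (trigPoly N 0 c) * fourierBCF n))) c n := by
  have h4 : HasWirtingerDerivAt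
      (fun c => circleMean ((trigPoly N 0 c * star (trigPoly N 0 c)) ^ 2))
      (circleMean ((trigPoly N 0 c * star (trigPoly N 0 c) * star (trigPoly N 0 c)
        + trigPoly N 0 c * star (trigPoly N 0 c) * star (trigPoly N 0 c)) * fourierBCF n)) c n := by
    simp only [sq]
    exact ((hasWirtingerDerivAt_mul_star_trigPoly.mul
      hasWirtingerDerivAt_mul_star_trigPoly).clm_comp circleMean).congr_deriv
        (congr_arg circleMean (by ring))
  have hμ : HasWirtingerDerivAt
      (fun c => circleMean (trigPoly N 0 c * star (trigPoly N 0 c)) ^ 2)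
      (2 * circleMean (trigPoly N 0 c * star (trigPoly N 0 c))
        * circleMean (star (trigPoly N 0 c) * fourierBCF n)) c n := by
    simp only [sq]
    refine (hasWirtingerDerivAt_mass.mul hasWirtingerDerivAt_mass).congr_deriv ?_
    rw [circleMean_star_trigPoly_mul_fourierBCF]
    ring
  have hQ : HasWirtingerDerivAt (fun c => circleMean (star (trigPoly N 0 c) * trigPoly N 1 c))
      (I * (n : ℤ) * circleMean (star (trigPoly N 0 c) * fourierBCF n)) c n :=
    (((hasWirtingerDerivAt_star_trigPoly 0).mul (hasWirtingerDerivAt_trigPoly 1)).clm_comp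
      circleMean).congr_deriv (by rw [← circleMean_algebraMap_mul]; congr 1; ring)
  exact ((h4.const_mul _).sub (hμ.const_mul _)).add (hQ.const_mul _)

theorem isDivFreeAt_I_mul_gamma_mul_apply_self (a b r : ℝ) :
    IsDivFreeAt (fun n c => I * (((a : ℂ)
        * circleMean ((trigPoly N 0 c * star (trigPoly N 0 c)) ^ 2)
        - b * circleMean (trigPoly N 0 c * star (trigPoly N 0 c)) ^ 2
        + I * r * circleMean (star (trigPoly N 0 c) * trigPoly N 1 c)) * c n)) c := by
  have hs0 := fun h => sum_mul_circleMean_mul_fourierBCF 0 c h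
  have hs1 := sum_mul_circleMean_mul_fourierBCF 1 c (star (trigPoly N 0 c))
  simp only [pow_zero, one_mul, pow_one] at hs0 hs1
  have hμ := circleMean_mul_star_trigPoly (c := c)
  have h4 := circleMean_mul_star_trigPoly_sq (c := c)
  have hQ := circleMean_star_trigPoly_mul_trigPoly_one (c := c)
  set f := trigPoly N 0 c
  refine ⟨_, fun n => (((hasWirtingerDerivAt_gamma a b r).mul
    hasWirtingerDerivAt_apply_self).const_mul I).congr_deriv
    (d' := I * (a * (c n * circleMean ((f * star f * star f + f * star f * star f)
      * fourierBCF n)) - b * 2 * circleMean (f * star f)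
        * (c n * circleMean (star f * fourierBCF n))
      + I * r * (I * (n : ℤ) * c n * circleMean (star f * fourierBCF n))
      + ((a : ℂ) * circleMean ((f * star f) ^ 2) - b * circleMean (f * star f) ^ 2
        + I * r * circleMean (star f * trigPoly N 1 c)))) (by ring), ?_⟩
  simp only [← Finset.mul_sum, Finset.sum_add_distrib, Finset.sum_sub_distrib, hs0, hs1,
    Finset.sum_const, mul_comm (star f) f,
    show (f * star f * star f + f * star f * star f) * f
      = (f * star f) ^ 2 + (f * star f) ^ 2 by ring,
    map_add, hμ, h4, hQ, nsmul_eq_mul]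
  simp [mul_re, mul_im, sq]

end Divergence

section Bridge

open Real

variable {N : ℕ}

theorem GammaF_toFun (α β : ℝ) (c : Idx N → ℂ) :
    GammaF α β (toFun N c)
      = ((3 * α * β / 2 + 2 * α ^ 2 : ℝ) : ℂ)
          * circleMean ((trigPoly N 0 c * star (trigPoly N 0 c)) ^ 2)
        - ((α ^ 2 : ℝ) : ℂ) * circleMean (trigPoly N 0 c * star (trigPoly N 0 c)) ^ 2
        + I * ((2 * α : ℝ) : ℂ) * circleMean (star (trigPoly N 0 c) * trigPoly N 1 c) := by
  have hint : ∫ y in (0 : ℝ)..(2 * π), deriv (toFun N c) y * conj (toFun N c y)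
      = 2 * π * circleMean (star (trigPoly N 0 c) * trigPoly N 1 c) := by
    rw [circleMean_apply, toFun_eq_coe_trigPoly, deriv_trigPoly]
    field_simp
    congr 1 with y
    simp [mul_comm]
  rw [GammaF, hint, circleMean_mul_star_trigPoly_sq, circleMean_mul_star_trigPoly]
  push_cast
  field_simp
  ring

theorem gdnlsField_eq (α β : ℝ) : gdnlsField N α β = fun (n : Idx N) c =>
    I * circleMean (trigPoly N 2 c * fourierBCF (-n))
    - ((2 * α : ℝ) : ℂ) * (circleMean (trigPoly N 0 c * star (trigPoly N 0 c))
        * circleMean (trigPoly N 1 c * fourierBCF (-n)))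
    + ((2 * (α + β) : ℝ) : ℂ)
        * circleMean (trigPoly N 0 c * star (trigPoly N 0 c) * trigPoly N 1 c * fourierBCF (-n))
    + ((2 * α + β : ℝ) : ℂ)
        * circleMean (trigPoly N 0 c * trigPoly N 0 c * star (trigPoly N 1 c) * fourierBCF (-n))
    - ((-α ^ 2 - α * β / 2 : ℝ) : ℂ) * (I * circleMean
        ((trigPoly N 0 c * star (trigPoly N 0 c)) ^ 2 * trigPoly N 0 c * fourierBCF (-n)))
    - ((-(α * β) : ℝ) : ℂ) * (I * (circleMean (trigPoly N 0 c * star (trigPoly N 0 c))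
        * circleMean (trigPoly N 0 c * star (trigPoly N 0 c) * trigPoly N 0 c * fourierBCF (-n))))
    - I * ((((3 * α * β / 2 + 2 * α ^ 2 : ℝ) : ℂ)
          * circleMean ((trigPoly N 0 c * star (trigPoly N 0 c)) ^ 2)
        - ((α ^ 2 : ℝ) : ℂ) * circleMean (trigPoly N 0 c * star (trigPoly N 0 c)) ^ 2
        + I * ((2 * α : ℝ) : ℂ) * circleMean (star (trigPoly N 0 c) * trigPoly N 1 c))
          * c n) := by
  ext n c
  rw [gdnlsField, GammaF_toFun, circleMean_mul_star_trigPoly]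
  simp only [toFun_eq_coe_trigPoly, deriv_trigPoly]
  rw [fCoeff_eq_circleMean (g := trigPoly N 2 c) (fun _ => rfl),
    fCoeff_eq_circleMean (g := trigPoly N 1 c) (fun _ => rfl),
    fCoeff_eq_circleMean (g := trigPoly N 0 c * star (trigPoly N 0 c) * trigPoly N 1 c)
      (fun x => by simp [mul_conj']),
    fCoeff_eq_circleMean (g := trigPoly N 0 c * trigPoly N 0 c * star (trigPoly N 1 c))
      (fun x => by simp [sq]),
    fCoeff_eq_circleMean (g := (trigPoly N 0 c * star (trigPoly N 0 c)) ^ 2 * trigPoly N 0 c)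
      (fun x => by simp [mul_conj', ← pow_mul]),
    fCoeff_eq_circleMean (g := trigPoly N 0 c * star (trigPoly N 0 c) * trigPoly N 0 c)
      (fun x => by simp [mul_conj'])]
  push_cast
  ring

end Bridge

/-- the truncated gauged DNLS vector field has vanishing divergence,
hence its flow preserves the Lebesgue measure on `ℂ^{2N+1}`. -/
theorem stmt18 (N : ℕ) (α β : ℝ) (c : Idx N → ℂ) :
    cdiv (gdnlsField N α β) c = 0 := by
  rw [gdnlsField_eq]
  exact ((((((isDivFreeAt_I_mul_coeff_deriv_deriv.sub
    (isDivFreeAt_mass_mul_coeff_deriv.ofReal_mul _)).add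
    (isDivFreeAt_coeff_normSq_mul_deriv.ofReal_mul _)).add
    (isDivFreeAt_coeff_sq_mul_star_deriv.ofReal_mul _)).sub
    (isDivFreeAt_I_mul_coeff_normSq_sq_mul.ofReal_mul _)).sub
    (isDivFreeAt_I_mul_mass_mul_coeff_normSq_mul.ofReal_mul _)).sub
    (isDivFreeAt_I_mul_gamma_mul_apply_self _ _ _)).cdiv_eq_zero
end
end
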